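/- arXiv:2204.01076 — 8 statements merged into one kernel-verified Lean document; each statement's English description precedes it below -/
import Mathlib

section
/- Inscribed Angle Theorem (comparison form): Let a, b be distinct points on a circle σ₀ and let c be a point on σ₀. Let σ₁ be a circle through a and b strictly containing c in its open disk (so σ₁ has larger radius among the pencil through a, b on the same side), and let c₁ be a point on σ₁ on the arc lying outside σ₀ (the long arc). If the angle ∠acb ≤ π/3, then ∠a c₁ b < ∠acb. -/
open Real EuclideanGeometry
open scoped RealInnerProductSpace

section Helpers

variable {E : Type*} [NormedAddCommGroup E] [InnerProductSpace ℝ E]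

/-- If `e - u` and `-e - u` have equal norms, then `e ⟂ u`. -/
lemma perp_of_norm_eq {e u : E} (h : ‖e - u‖ = ‖-e - u‖) : ⟪e, u⟫ = 0 := by
  have h' : ‖e - u‖ ^ 2 = ‖e + u‖ ^ 2 := by
    rw [h]
    have : -e - u = -(e + u) := by abel
    rw [this, norm_neg]
  rw [norm_sub_sq_real, norm_add_sq_real] at h'
  linarith

/-- `Real.sin` of the absolute value of `toReal` equals the absolute value of the
`Real.Angle` sine. -/
lemma sin_abs_toReal (θ : Real.Angle) : Real.sin |θ.toReal| = |θ.sin| := by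
  have h1 : θ.sin = Real.sin θ.toReal := by
    conv_lhs => rw [← θ.coe_toReal]
    rw [Real.Angle.sin_coe]
  rcases le_or_gt 0 θ.toReal with h | h
  · rw [abs_of_nonneg h, h1,
      abs_of_nonneg (Real.sin_nonneg_of_nonneg_of_le_pi h θ.toReal_le_pi)]
  · rw [abs_of_neg h, h1, Real.sin_neg,
      abs_of_nonpos (Real.sin_nonpos_of_nonpos_of_neg_pi_le h.le θ.neg_pi_lt_toReal.le)]

end Helpers


/-- Pure real arithmetic: sign chain for the inscribed-angle comparison. -/
lemma pos_of_mul_pos_left' {E X : ℝ} (hE : 0 < E) (h : 0 < E * X) : 0 < X := by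
  nlinarith

lemma sign_chain {h t₀ t₁ h₁ : ℝ} (h1 : 0 < h * t₀) (h2 : h * t₀ < h * t₁)
    (h3 : h₁ * t₀ < h₁ * t₁) : t₀ ^ 2 < t₁ ^ 2 ∧ 0 < h₁ * t₁ := by
  have ha : 0 < h * t₁ := lt_trans h1 h2
  have hne : h ≠ 0 := by
    intro h0; rw [h0, zero_mul] at h1; exact lt_irrefl 0 h1
  have hsq : 0 < h ^ 2 := lt_of_le_of_ne (sq_nonneg h) (Ne.symm (pow_ne_zero 2 hne))
  have h4 : 0 < t₁ * (t₁ - t₀) := by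
    apply pos_of_mul_pos_left' hsq
    nlinarith [mul_pos ha (sub_pos.mpr h2)]
  constructor
  · apply lt_of_sub_pos
    apply pos_of_mul_pos_left' hsq
    nlinarith [mul_pos (mul_pos h1 ha) (sub_pos.mpr h2), mul_pos h1 ha,
      mul_pos ha (sub_pos.mpr h2), mul_pos h1 (sub_pos.mpr h2)]
  · have hne2 : t₁ - t₀ ≠ 0 := by
      intro h0; rw [h0, mul_zero] at h4; exact lt_irrefl 0 h4
    have hsq2 : 0 < (t₁ - t₀) ^ 2 :=
      lt_of_le_of_ne (sq_nonneg _) (Ne.symm (pow_ne_zero 2 hne2))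
    apply pos_of_mul_pos_left' hsq2
    nlinarith [mul_pos h4 (sub_pos.mpr h3)]

lemma sq_lt_of_mul_sq {E t₀ t₁ x y r₀ r₁ : ℝ} (hE : 0 < E) (h1 : t₀ ^ 2 = E * x)
    (h2 : t₁ ^ 2 = E * y) (h3 : t₀ ^ 2 < t₁ ^ 2) (h4 : r₀ ^ 2 = E + x) (h5 : r₁ ^ 2 = E + y)
    (h6 : 0 < r₀) (h7 : 0 < r₁) : r₀ < r₁ := by
  have hx : x < y := by
    have := h3
    rw [h1, h2] at this
    exact lt_of_mul_lt_mul_left this hE.le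
  nlinarith

/-- Inscribed Angle Theorem (comparison form): if `a, b, c` lie on a circle `σ₀`
(center `o₀`, radius `r₀`), `σ₁` (center `o₁`, radius `r₁`) passes through `a` and `b`
and strictly contains `c` in its open disk, `c₁` lies on `σ₁` outside the closed disk
of `σ₀`, and `∠ a c b ≤ π / 3`, then `∠ a c₁ b < ∠ a c b`. -/
theorem inscribed_angle_comparison
    (a b c c₁ o₀ o₁ : EuclideanSpace ℝ (Fin 2)) (r₀ r₁ : ℝ)
    (hab : a ≠ b)
    (ha₀ : dist a o₀ = r₀) (hb₀ : dist b o₀ = r₀) (hc₀ : dist c o₀ = r₀)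
    (ha₁ : dist a o₁ = r₁) (hb₁ : dist b o₁ = r₁)
    (hc_in : dist c o₁ < r₁)
    (hc₁ : dist c₁ o₁ = r₁) (hc₁_out : r₀ < dist c₁ o₀)
    (hangle : EuclideanGeometry.angle a c b ≤ π / 3) :
    EuclideanGeometry.angle a c₁ b < EuclideanGeometry.angle a c b := by
  haveI : Fact (Module.finrank ℝ (EuclideanSpace ℝ (Fin 2)) = 2) :=
    ⟨finrank_euclideanSpace_fin⟩
  haveI : Module.Oriented ℝ (EuclideanSpace ℝ (Fin 2)) (Fin 2) :=
    ⟨(EuclideanSpace.basisFun (Fin 2) ℝ).toBasis.orientation⟩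
  have hpi := Real.pi_pos
  -- nondegeneracy
  have hr₁pos : 0 < r₁ := lt_of_le_of_lt dist_nonneg hc_in
  have hca : c ≠ a := by rintro rfl; exact absurd ha₁ (ne_of_lt hc_in)
  have hcb : c ≠ b := by rintro rfl; exact absurd hb₁ (ne_of_lt hc_in)
  have hc₁a : c₁ ≠ a := by rintro rfl; exact absurd ha₀ (ne_of_gt hc₁_out)
  have hc₁b : c₁ ≠ b := by rintro rfl; exact absurd hb₀ (ne_of_gt hc₁_out)
  have hr₀pos : 0 < r₀ := by
    rcases lt_or_eq_of_le (dist_nonneg.trans ha₀.le) with h | h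
    · exact h
    · exfalso
      apply hab
      have h1 : dist a o₀ = 0 := by rw [ha₀, ← h]
      have h2 : dist b o₀ = 0 := by rw [hb₀, ← h]
      rw [dist_eq_zero] at h1 h2
      rw [h1, h2]
  -- vector set-up about the midpoint of a b
  set m : EuclideanSpace ℝ (Fin 2) := (2⁻¹ : ℝ) • (a + b) with hm
  set e := a - m with he
  set u₀ := o₀ - m with hu₀
  set u₁ := o₁ - m with hu₁
  set q := c - m with hq
  set q₁ := c₁ - m with hq₁
  have hbm : b - m = -e := by rw [he, hm]; module
  have hsub : ∀ x y : EuclideanSpace ℝ (Fin 2), (x - m) - (y - m) = x - y := by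
    intro x y; abel
  -- distances as norms of these vectors
  have da₀ : ‖e - u₀‖ = r₀ := by rw [he, hu₀, hsub, ← dist_eq_norm, ha₀]
  have db₀ : ‖-e - u₀‖ = r₀ := by rw [← hbm, hu₀, hsub, ← dist_eq_norm, hb₀]
  have da₁ : ‖e - u₁‖ = r₁ := by rw [he, hu₁, hsub, ← dist_eq_norm, ha₁]
  have db₁ : ‖-e - u₁‖ = r₁ := by rw [← hbm, hu₁, hsub, ← dist_eq_norm, hb₁]
  have dc₀ : ‖q - u₀‖ = r₀ := by rw [hq, hu₀, hsub, ← dist_eq_norm, hc₀]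
  have dcin : ‖q - u₁‖ < r₁ := by rw [hq, hu₁, hsub, ← dist_eq_norm]; exact hc_in
  have dc₁ : ‖q₁ - u₁‖ = r₁ := by rw [hq₁, hu₁, hsub, ← dist_eq_norm, hc₁]
  have dc₁out : r₀ < ‖q₁ - u₀‖ := by rw [hq₁, hu₀, hsub, ← dist_eq_norm]; exact hc₁_out
  -- perpendicularity of the chord and the centers
  have hperp₀ : ⟪e, u₀⟫ = 0 := perp_of_norm_eq (by rw [da₀, db₀])
  have hperp₁ : ⟪e, u₁⟫ = 0 := perp_of_norm_eq (by rw [da₁, db₁])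
  -- power-of-a-point style identities
  have P0 : ‖q‖ ^ 2 - ‖e‖ ^ 2 = 2 * ⟪q, u₀⟫ := by
    have h1 : ‖q - u₀‖ ^ 2 = ‖e - u₀‖ ^ 2 := by rw [dc₀, da₀]
    rw [norm_sub_sq_real q u₀, norm_sub_sq_real e u₀] at h1
    rw [hperp₀] at h1; linarith only [h1]
  have Pin : ‖q‖ ^ 2 - ‖e‖ ^ 2 < 2 * ⟪q, u₁⟫ := by
    have h1 : ‖q - u₁‖ ^ 2 < ‖e - u₁‖ ^ 2 := by
      rw [da₁]
      exact pow_lt_pow_left₀ dcin (norm_nonneg _) two_ne_zero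
    rw [norm_sub_sq_real q u₁, norm_sub_sq_real e u₁] at h1
    rw [hperp₁] at h1; linarith only [h1]
  have P1 : ‖q₁‖ ^ 2 - ‖e‖ ^ 2 = 2 * ⟪q₁, u₁⟫ := by
    have h1 : ‖q₁ - u₁‖ ^ 2 = ‖e - u₁‖ ^ 2 := by rw [dc₁, da₁]
    rw [norm_sub_sq_real q₁ u₁, norm_sub_sq_real e u₁] at h1
    rw [hperp₁] at h1; linarith only [h1]
  have Pout : 2 * ⟪q₁, u₀⟫ < ‖q₁‖ ^ 2 - ‖e‖ ^ 2 := by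
    have h1 : ‖e - u₀‖ ^ 2 < ‖q₁ - u₀‖ ^ 2 := by
      rw [da₀]
      exact pow_lt_pow_left₀ dc₁out hr₀pos.le two_ne_zero
    rw [norm_sub_sq_real e u₀, norm_sub_sq_real q₁ u₀] at h1
    rw [hperp₀] at h1; linarith only [h1]
  -- the inner products at c and c₁
  have hac : a - c = e - q := by rw [he, hq, hsub]
  have hbc : b - c = -e - q := by
    have : b - c = (b - m) - (c - m) := by abel
    rw [this, hbm, hq]
  have hac₁ : a - c₁ = e - q₁ := by rw [he, hq₁, hsub]
  have hbc₁ : b - c₁ = -e - q₁ := by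
    have : b - c₁ = (b - m) - (c₁ - m) := by abel
    rw [this, hbm, hq₁]
  have hinner_c : ⟪a - c, b - c⟫ = ‖q‖ ^ 2 - ‖e‖ ^ 2 := by
    rw [hac, hbc]
    simp only [inner_sub_left, inner_sub_right, inner_neg_left, inner_neg_right,
      real_inner_self_eq_norm_sq]
    rw [real_inner_comm q e]
    ring
  have hinner_c₁ : ⟪a - c₁, b - c₁⟫ = ‖q₁‖ ^ 2 - ‖e‖ ^ 2 := by
    rw [hac₁, hbc₁]
    simp only [inner_sub_left, inner_sub_right, inner_neg_left, inner_neg_right,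
      real_inner_self_eq_norm_sq]
    rw [real_inner_comm q₁ e]
    ring
  -- angle at c is acute, hence c is on the far side
  have hangle_eq : EuclideanGeometry.angle a c b = InnerProductGeometry.angle (a - c) (b - c) := by
    simp [EuclideanGeometry.angle, vsub_eq_sub]
  have hangle_eq₁ : EuclideanGeometry.angle a c₁ b
      = InnerProductGeometry.angle (a - c₁) (b - c₁) := by
    simp [EuclideanGeometry.angle, vsub_eq_sub]
  have hnac : 0 < ‖a - c‖ := by rw [norm_pos_iff, sub_ne_zero]; exact fun h => hca h.symm
  have hnbc : 0 < ‖b - c‖ := by rw [norm_pos_iff, sub_ne_zero]; exact fun h => hcb h.symm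
  have hnac₁ : 0 < ‖a - c₁‖ := by rw [norm_pos_iff, sub_ne_zero]; exact fun h => hc₁a h.symm
  have hnbc₁ : 0 < ‖b - c₁‖ := by rw [norm_pos_iff, sub_ne_zero]; exact fun h => hc₁b h.symm
  have hcos_pos : 0 < Real.cos (EuclideanGeometry.angle a c b) := by
    apply Real.cos_pos_of_mem_Ioo
    constructor
    · have := EuclideanGeometry.angle_nonneg a c b; linarith only [this, hpi]
    · linarith only [hangle, hpi]
  have hinner_c_pos : 0 < ⟪a - c, b - c⟫ := by
    have h1 := InnerProductGeometry.cos_angle (a - c) (b - c)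
    rw [← hangle_eq] at h1
    have h2 : ⟪a - c, b - c⟫
        = Real.cos (EuclideanGeometry.angle a c b) * (‖a - c‖ * ‖b - c‖) := by
      rw [h1]; field_simp
    rw [h2]
    positivity
  -- translate to the area-form coordinates
  set ori : Orientation ℝ (EuclideanSpace ℝ (Fin 2)) (Fin 2) := positiveOrientation with hori
  have hC := fun x y => ori.inner_mul_inner_add_areaForm_mul_areaForm e x y
  set t₀ := ori.areaForm e u₀ with ht₀
  set t₁ := ori.areaForm e u₁ with ht₁
  set h := ori.areaForm e q with hh
  set h₁ := ori.areaForm e q₁ with hh₁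
  have hene : e ≠ 0 := by
    have he2 : e = (2⁻¹ : ℝ) • (a - b) := by rw [he, hm]; module
    rw [he2]
    exact smul_ne_zero (by norm_num) (sub_ne_zero.mpr hab)
  have hE : 0 < ‖e‖ ^ 2 := by
    have h0 : 0 < ‖e‖ := norm_pos_iff.mpr hene
    positivity
  have hCq0 : h * t₀ = ‖e‖ ^ 2 * ⟪q, u₀⟫ := by
    have := hC q u₀; rw [hperp₀] at this; rw [hh, ht₀]; linarith only [this]
  have hCq1 : h * t₁ = ‖e‖ ^ 2 * ⟪q, u₁⟫ := by
    have := hC q u₁; rw [hperp₁] at this; rw [hh, ht₁]; linarith only [this]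
  have hCq₁0 : h₁ * t₀ = ‖e‖ ^ 2 * ⟪q₁, u₀⟫ := by
    have := hC q₁ u₀; rw [hperp₀] at this; rw [hh₁, ht₀]; linarith only [this]
  have hCq₁1 : h₁ * t₁ = ‖e‖ ^ 2 * ⟪q₁, u₁⟫ := by
    have := hC q₁ u₁; rw [hperp₁] at this; rw [hh₁, ht₁]; linarith only [this]
  have hCu0 : t₀ ^ 2 = ‖e‖ ^ 2 * ‖u₀‖ ^ 2 := by
    have := hC u₀ u₀; rw [hperp₀, real_inner_self_eq_norm_sq] at this
    rw [ht₀, sq]; linarith only [this]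
  have hCu1 : t₁ ^ 2 = ‖e‖ ^ 2 * ‖u₁‖ ^ 2 := by
    have := hC u₁ u₁; rw [hperp₁, real_inner_self_eq_norm_sq] at this
    rw [ht₁, sq]; linarith only [this]
  -- the sign chain
  have hqu₀pos : 0 < ⟪q, u₀⟫ := by
    rw [hinner_c] at hinner_c_pos; linarith only [hinner_c_pos, P0]
  have hht₀ : 0 < h * t₀ := by rw [hCq0]; positivity
  have hht₁ : h * t₀ < h * t₁ := by
    rw [hCq0, hCq1]
    have : ⟪q, u₀⟫ < ⟪q, u₁⟫ := by linarith only [P0, Pin]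
    exact (mul_lt_mul_iff_right₀ hE).mpr this
  have hh₁t : h₁ * t₀ < h₁ * t₁ := by
    rw [hCq₁0, hCq₁1]
    have : ⟪q₁, u₀⟫ < ⟪q₁, u₁⟫ := by linarith only [P1, Pout]
    exact (mul_lt_mul_iff_right₀ hE).mpr this
  -- conclude t₀² < t₁² and h₁ t₁ > 0
  obtain ⟨ht_sq, hh₁t₁pos⟩ := sign_chain hht₀ hht₁ hh₁t
  -- angle at c₁ is acute
  have hq₁u₁pos : 0 < ⟪q₁, u₁⟫ :=
    pos_of_mul_pos_left' hE (hCq₁1 ▸ hh₁t₁pos)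
  have hinner_c₁pos : 0 < ⟪a - c₁, b - c₁⟫ := by rw [hinner_c₁]; linarith only [P1, hq₁u₁pos]
  have hcos₁pos : 0 < Real.cos (EuclideanGeometry.angle a c₁ b) := by
    have h1 := InnerProductGeometry.cos_angle (a - c₁) (b - c₁)
    rw [← hangle_eq₁] at h1
    rw [h1]
    positivity
  have hθ₁lt : EuclideanGeometry.angle a c₁ b < π / 2 := by
    by_contra hcon
    push_neg at hcon
    have := Real.cos_nonpos_of_pi_div_two_le_of_le hcon
      (by have := EuclideanGeometry.angle_le_pi a c₁ b; linarith only [this, hpi])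
    linarith only [this, hcos₁pos]
  -- radii comparison
  have hr₀sq : r₀ ^ 2 = ‖e‖ ^ 2 + ‖u₀‖ ^ 2 := by
    have h1 : ‖e - u₀‖ ^ 2 = r₀ ^ 2 := by rw [da₀]
    rw [norm_sub_sq_real e u₀, hperp₀] at h1; linarith only [h1]
  have hr₁sq : r₁ ^ 2 = ‖e‖ ^ 2 + ‖u₁‖ ^ 2 := by
    have h1 : ‖e - u₁‖ ^ 2 = r₁ ^ 2 := by rw [da₁]
    rw [norm_sub_sq_real e u₁, hperp₁] at h1; linarith only [h1]
  have hrlt : r₀ < r₁ :=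
    sq_lt_of_mul_sq hE hCu0 hCu1 ht_sq hr₀sq hr₁sq hr₀pos hr₁pos
  -- law of sines on each circle
  have hsin_eq : ∀ (x o : EuclideanSpace ℝ (Fin 2)) (r : ℝ), dist a o = r → dist b o = r →
      dist x o = r → x ≠ a → x ≠ b →
      dist a b / Real.sin (EuclideanGeometry.angle a x b) = 2 * r := by
    intro x o r hao hbo hxo hxa hxb
    have hls := EuclideanGeometry.Sphere.dist_div_sin_oangle_eq_two_mul_radius
      (s := ⟨o, r⟩) (p₁ := a) (p₂ := x) (p₃ := b)
      (by simpa [EuclideanGeometry.mem_sphere] using hao)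
      (by simpa [EuclideanGeometry.mem_sphere] using hxo)
      (by simpa [EuclideanGeometry.mem_sphere] using hbo)
      (Ne.symm hxa) hab hxb
    have habs : Real.sin (EuclideanGeometry.angle a x b)
        = |Real.Angle.sin (EuclideanGeometry.oangle a x b)| := by
      rw [EuclideanGeometry.angle_eq_abs_oangle_toReal (fun hh => hxa hh.symm)
        (fun hh => hxb hh.symm)]
      exact sin_abs_toReal _
    rw [habs]
    exact hls
  have hsin₀ := hsin_eq c o₀ r₀ ha₀ hb₀ hc₀ (Ne.symm (fun hh => hca hh.symm))
      (Ne.symm (fun hh => hcb hh.symm))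
  have hsin₁ := hsin_eq c₁ o₁ r₁ ha₁ hb₁ hc₁ (Ne.symm (fun hh => hc₁a hh.symm))
      (Ne.symm (fun hh => hc₁b hh.symm))
  have hD : 0 < dist a b := dist_pos.mpr hab
  have hsne₀ : Real.sin (EuclideanGeometry.angle a c b) ≠ 0 := by
    intro hz; rw [hz, div_zero] at hsin₀; linarith only [hsin₀, hr₀pos]
  have hsne₁ : Real.sin (EuclideanGeometry.angle a c₁ b) ≠ 0 := by
    intro hz; rw [hz, div_zero] at hsin₁; linarith only [hsin₁, hr₁pos]
  have hsv₀ : Real.sin (EuclideanGeometry.angle a c b) = dist a b / (2 * r₀) := by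
    rw [div_eq_iff hsne₀] at hsin₀
    field_simp
    linarith only [hsin₀]
  have hsv₁ : Real.sin (EuclideanGeometry.angle a c₁ b) = dist a b / (2 * r₁) := by
    rw [div_eq_iff hsne₁] at hsin₁
    field_simp
    linarith only [hsin₁]
  -- compare the sines and conclude
  have hsin_lt : Real.sin (EuclideanGeometry.angle a c₁ b)
      < Real.sin (EuclideanGeometry.angle a c b) := by
    rw [hsv₀, hsv₁]
    exact div_lt_div_of_pos_left hD (by linarith only [hr₀pos]) (by linarith only [hrlt])
  by_contra hcon
  push_neg at hcon
  have hmem₀ : EuclideanGeometry.angle a c b ∈ Set.Icc (-(π / 2)) (π / 2) :=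
    ⟨by have := EuclideanGeometry.angle_nonneg a c b; linarith only [this, hpi], by linarith only [hangle, hpi]⟩
  have hmem₁ : EuclideanGeometry.angle a c₁ b ∈ Set.Icc (-(π / 2)) (π / 2) :=
    ⟨by have := EuclideanGeometry.angle_nonneg a c₁ b; linarith only [this, hpi], hθ₁lt.le⟩
  have := Real.strictMonoOn_sin.monotoneOn hmem₀ hmem₁ hcon
  linarith only [this, hsin_lt]
end

section
/- Inscribed Angle Theorem (supplementary angles): If a, b, c, c' lie on a common circle in ℝ² with c and c' on opposite open arcs determined by a and b, then ∠acb + ∠ac'b = π. -/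
/-!
Measured with a common orientation, the oriented angles `∡ a c b` and `∡ a c' b` agree modulo `π`
(`Sphere.two_zsmul_oangle_eq`), while `c` and `c'` lying on opposite sides of the chord gives them
opposite, nonzero signs. Two angles that are equal modulo `π` but have opposite signs differ by
exactly `π`, so their absolute values, the unoriented angles, add up to `π`.
-/

open Real EuclideanGeometry Module

namespace EuclideanGeometry.Sphere

variable {V P : Type*} [NormedAddCommGroup V] [InnerProductSpace ℝ V] [MetricSpace P]
  [NormedAddTorsor V P] {s : Sphere P} {a b c c' : P}

-- If `a = b`, the line is the point `a`, which would lie strictly between `c` and `c'` and hence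
-- strictly inside the sphere.
theorem ne_of_sOppSide_affineSpan_pair (ha : a ∈ s) (hc : c ∈ s) (hc' : c' ∈ s)
    (h : line[ℝ, a, b].SOppSide c c') : a ≠ b := by
  rintro rfl
  obtain ⟨p, hp, hcpc'⟩ := h.exists_sbtw
  obtain rfl : p = a := by simpa using hp
  have hlt := hcpc'.dist_lt_max_dist s.center
  rw [mem_sphere] at ha hc hc'
  simp [ha, hc, hc'] at hlt

theorem angle_add_angle_eq_pi_of_sOppSide [Fact (finrank ℝ V = 2)] (ha : a ∈ s) (hb : b ∈ s)
    (hc : c ∈ s) (hc' : c' ∈ s) (h : line[ℝ, a, b].SOppSide c c') :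
    ∠ a c b + ∠ a c' b = π := by
  have : FiniteDimensional ℝ V := .of_fact_finrank_eq_two
  let _ : Module.Oriented ℝ V (Fin 2) :=
    ⟨Basis.orientation (finBasisOfFinrankEq ℝ V Fact.out)⟩
  have hab := ne_of_sOppSide_affineSpan_pair ha hc hc' h
  have ha_mem : a ∈ line[ℝ, a, b] := left_mem_affineSpan_pair ℝ a b
  have hb_mem : b ∈ line[ℝ, a, b] := right_mem_affineSpan_pair ℝ a b
  have hca : c ≠ a := fun he => h.left_notMem (he ▸ ha_mem)
  have hcb : c ≠ b := fun he => h.left_notMem (he ▸ hb_mem)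
  have hc'a : c' ≠ a := fun he => h.right_notMem (he ▸ ha_mem)
  have hc'b : c' ≠ b := fun he => h.right_notMem (he ▸ hb_mem)
  have h_two_zsmul : (2 : ℤ) • (∡ a c b + ∡ b c' a) = 0 := by
    rw [oangle_rev a c' b, smul_add, two_zsmul_oangle_eq ha hc hc' hb hca hcb hc'a hc'b, smul_neg,
      add_neg_cancel]
  have h_sign : (∡ a c b).sign = (∡ b c' a).sign := by
    rw [oangle_rev a c' b, Real.Angle.sign_neg, h.oangle_sign_eq_neg ha_mem hb_mem, neg_neg]
  have h_sign_ne_zero : (∡ a c b).sign ≠ 0 := by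
    rw [Ne, oangle_sign_eq_zero_iff_collinear]
    exact fun hcol => h.left_notMem
      (hcol.mem_affineSpan_of_mem_of_ne (by simp) (by simp) (by simp) hab)
  rw [angle_eq_abs_oangle_toReal hca.symm hcb.symm, angle_comm,
    angle_eq_abs_oangle_toReal hc'b.symm hc'a.symm]
  exact Real.Angle.abs_toReal_add_abs_toReal_eq_pi_of_two_zsmul_add_eq_zero_of_sign_eq
    h_two_zsmul h_sign h_sign_ne_zero

end EuclideanGeometry.Sphere

/-- Inscribed Angle Theorem (supplementary angles): four points on a common circle
with `c` and `c'` strictly on opposite sides of the chord `a b` (opposite open arcs)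
span supplementary angles over the chord. -/
theorem inscribed_angle_add_eq_pi_of_oppSide
    (a b c c' o : EuclideanSpace ℝ (Fin 2)) (r : ℝ)
    (ha : dist a o = r) (hb : dist b o = r) (hc : dist c o = r) (hc' : dist c' o = r)
    (hside : AffineSubspace.SOppSide (affineSpan ℝ ({a, b} : Set (EuclideanSpace ℝ (Fin 2)))) c c') :
    EuclideanGeometry.angle a c b + EuclideanGeometry.angle a c' b = π := by
  have : Fact (finrank ℝ (EuclideanSpace ℝ (Fin 2)) = 2) := ⟨finrank_euclideanSpace_fin⟩
  exact Sphere.angle_add_angle_eq_pi_of_sOppSide (s := ⟨o, r⟩) ha hb hc hc' hside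
end

section
/- Let A ⊆ ℝ² be locally finite and coarsely dense, and for ℓ ≥ 0 define α_ℓ(A) = inf{∠acb : a,b,c ∈ A pairwise distinct and non-collinear, the open disk bounded by the circumcircle of a,b,c contains exactly ℓ points of A}. Then α_ℓ(A) ≥ α_{ℓ+1}(A) for all ℓ ≥ 0, provided A is generic (no four points of A cocircular). -/
open Real EuclideanGeometry
open scoped RealInnerProductSpace

/-- `A` is locally finite: every closed disk contains finitely many points of `A`. -/
def IsLocallyFinite2 (A : Set (EuclideanSpace ℝ (Fin 2))) : Prop :=
  ∀ (x : EuclideanSpace ℝ (Fin 2)) (r : ℝ), {p ∈ A | dist p x ≤ r}.Finite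

/-- `A` is coarsely dense: every closed half-plane contains infinitely many points of `A`. -/
def IsCoarselyDense2 (A : Set (EuclideanSpace ℝ (Fin 2))) : Prop :=
  ∀ (v : EuclideanSpace ℝ (Fin 2)), v ≠ 0 → ∀ t : ℝ, {p ∈ A | t ≤ ⟪v, p⟫}.Infinite

/-- `A` is generic: no four pairwise distinct points of `A` lie on a common circle. -/
def IsGeneric2 (A : Set (EuclideanSpace ℝ (Fin 2))) : Prop :=
  ∀ p₁ p₂ p₃ p₄ : EuclideanSpace ℝ (Fin 2),
    p₁ ∈ A → p₂ ∈ A → p₃ ∈ A → p₄ ∈ A →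
    p₁ ≠ p₂ → p₁ ≠ p₃ → p₁ ≠ p₄ → p₂ ≠ p₃ → p₂ ≠ p₄ → p₃ ≠ p₄ →
    ¬ ∃ (o : EuclideanSpace ℝ (Fin 2)) (r : ℝ),
        dist p₁ o = r ∧ dist p₂ o = r ∧ dist p₃ o = r ∧ dist p₄ o = r

/-- The set of angles `∠ a c b` over pairwise distinct, non-collinear triples of points
of `A` whose circumcircle encloses exactly `ℓ` points of `A` in its open disk. -/
def angleSet (A : Set (EuclideanSpace ℝ (Fin 2))) (ℓ : ℕ) : Set ℝ :=
  {θ | ∃ (a b c o : EuclideanSpace ℝ (Fin 2)) (r : ℝ),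
    a ∈ A ∧ b ∈ A ∧ c ∈ A ∧ a ≠ b ∧ a ≠ c ∧ b ≠ c ∧
    ¬ Collinear ℝ ({a, b, c} : Set (EuclideanSpace ℝ (Fin 2))) ∧
    dist a o = r ∧ dist b o = r ∧ dist c o = r ∧
    {p ∈ A | dist p o < r}.Finite ∧ {p ∈ A | dist p o < r}.ncard = ℓ ∧
    θ = EuclideanGeometry.angle a c b}

/-- `α_ℓ(A)`: the infimum of the angles over triples with exactly `ℓ` enclosed points,
taken to be `π` if there is no such triple. -/
noncomputable def alphaInf (A : Set (EuclideanSpace ℝ (Fin 2))) (ℓ : ℕ) : ℝ :=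
  sInf (insert π (angleSet A ℓ))

/-- `β_ℓ(A)`: the infimum of the supplementary angles over the same triples,
taken to be `π` if there is no such triple. -/
noncomputable def betaInf (A : Set (EuclideanSpace ℝ (Fin 2))) (ℓ : ℕ) : ℝ :=
  sInf (insert π ((fun θ => π - θ) '' angleSet A ℓ))



local notation "E2" => EuclideanSpace ℝ (Fin 2)

private lemma arccos_anti {x y : ℝ} (h : x ≤ y) : Real.arccos y ≤ Real.arccos x := by
  simp only [Real.arccos]; have := Real.monotone_arcsin h; linarith


private lemma l2_ineq (L h S y : ℝ) (hL : 0 < L) (hy : 0 < y) (hS : 2*h*y ≤ S) :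
    2*h / Real.sqrt (L^2 + 4*h^2) ≤ S / Real.sqrt (S^2 + L^2*y^2) := by
  have hR : 0 < L^2 + 4*h^2 := by positivity
  have hP : 0 < S^2 + L^2*y^2 := by positivity
  have hRs : 0 < Real.sqrt (L^2+4*h^2) := Real.sqrt_pos.mpr hR
  have hPs : 0 < Real.sqrt (S^2+L^2*y^2) := Real.sqrt_pos.mpr hP
  rw [div_le_div_iff₀ hRs hPs]
  rcases le_or_gt h 0 with hh | hh
  · rcases le_or_gt 0 S with hS0 | hS0
    · have h1 : 2*h*Real.sqrt (S^2+L^2*y^2) ≤ 0 :=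
        mul_nonpos_of_nonpos_of_nonneg (by linarith) hPs.le
      have h2 : 0 ≤ S * Real.sqrt (L^2+4*h^2) := mul_nonneg hS0 hRs.le
      linarith
    · have hkey : S^2 * (L^2+4*h^2) ≤ (2*h)^2 * (S^2+L^2*y^2) := by
        nlinarith [mul_nonneg (sub_nonneg.mpr hS) (by linarith : (0:ℝ) ≤ -(S + 2*h*y)),
          sq_nonneg L, sq_nonneg (L*y)]
      have e1 : -S * Real.sqrt (L^2+4*h^2) = Real.sqrt (S^2 * (L^2+4*h^2)) := by
        rw [Real.sqrt_mul (sq_nonneg S), Real.sqrt_sq_eq_abs, abs_of_neg hS0]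
      have e2 : -(2*h) * Real.sqrt (S^2+L^2*y^2) = Real.sqrt ((2*h)^2 * (S^2+L^2*y^2)) := by
        rw [Real.sqrt_mul (sq_nonneg (2*h)), Real.sqrt_sq_eq_abs, abs_of_nonpos (by linarith : 2*h ≤ 0)]
      have := Real.sqrt_le_sqrt hkey
      rw [← e1, ← e2] at this
      linarith
  · have hSpos : 0 < S := by nlinarith
    have hkey : (2*h)^2 * (S^2+L^2*y^2) ≤ S^2 * (L^2+4*h^2) := by
      nlinarith [mul_nonneg (sub_nonneg.mpr hS) (by positivity : (0:ℝ) ≤ S + 2*h*y),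
        sq_nonneg L, sq_nonneg (L*y)]
    have e1 : S * Real.sqrt (L^2+4*h^2) = Real.sqrt (S^2 * (L^2+4*h^2)) := by
      rw [Real.sqrt_mul (sq_nonneg S), Real.sqrt_sq_eq_abs, abs_of_pos hSpos]
    have e2 : 2*h * Real.sqrt (S^2+L^2*y^2) = Real.sqrt ((2*h)^2 * (S^2+L^2*y^2)) := by
      rw [Real.sqrt_mul (sq_nonneg (2*h)), Real.sqrt_sq_eq_abs, abs_of_pos (by linarith : 0 < 2*h)]
    have := Real.sqrt_le_sqrt hkey
    rw [← e1, ← e2] at this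
    linarith

/-- Parseval-type key identity for a 2D orthonormal pair. -/
private lemma inner_expand {e₁ e₂ : E2} (h1 : ‖e₁‖ = 1) (h2 : ‖e₂‖ = 1)
    (h12 : ⟪e₁, e₂⟫ = 0) (v w : E2) :
    ⟪v, w⟫ = ⟪e₁, v⟫ * ⟪e₁, w⟫ + ⟪e₂, v⟫ * ⟪e₂, w⟫ := by
  have h21 : ⟪e₂, e₁⟫ = 0 := by rw [real_inner_comm]; exact h12
  have h11 : ⟪e₁, e₁⟫ = 1 := by rw [real_inner_self_eq_norm_sq, h1]; norm_num
  have h22 : ⟪e₂, e₂⟫ = 1 := by rw [real_inner_self_eq_norm_sq, h2]; norm_num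
  have hon : Orthonormal ℝ ![e₁, e₂] := by
    constructor
    · intro i; fin_cases i <;> simpa
    · intro i j hij
      fin_cases i <;> fin_cases j <;> simp_all
  have hli := hon.linearIndependent
  have hspan : Submodule.span ℝ (Set.range ![e₁, e₂]) = ⊤ := by
    apply Submodule.eq_top_of_finrank_eq
    rw [finrank_span_eq_card hli]
    simp [finrank_euclideanSpace_fin]
  have hrange : Set.range ![e₁, e₂] = {e₁, e₂} := by
    rw [Matrix.range_cons, Matrix.range_cons, Matrix.range_empty]
    simp [Set.pair_comm]
  have coord : ∀ z : E2, z = ⟪e₁, z⟫ • e₁ + ⟪e₂, z⟫ • e₂ := by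
    intro z
    have hz : z ∈ Submodule.span ℝ ({e₁, e₂} : Set E2) := by
      rw [← hrange, hspan]; trivial
    obtain ⟨m, n, hmn⟩ := Submodule.mem_span_pair.mp hz
    have hm : ⟪e₁, z⟫ = m := by
      rw [← hmn, inner_add_right, real_inner_smul_right, real_inner_smul_right, h11, h12]
      ring
    have hn : ⟪e₂, z⟫ = n := by
      rw [← hmn, inner_add_right, real_inner_smul_right, real_inner_smul_right, h21, h22]
      ring
    rw [hm, hn, hmn]
  conv_lhs => rw [coord v]
  rw [inner_add_left, real_inner_smul_left, real_inner_smul_left]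

private lemma collinear_of_eq_smul {a b c : E2} (t : ℝ) (h : c - a = t • (b - a)) :
    Collinear ℝ ({a, b, c} : Set E2) := by
  rw [collinear_iff_exists_forall_eq_smul_vadd]
  refine ⟨a, b - a, ?_⟩
  intro x hx
  rcases hx with rfl | rfl | rfl
  · exact ⟨0, by simp⟩
  · exact ⟨1, by simp⟩
  · refine ⟨t, ?_⟩
    rw [← h]
    simp

private lemma inner_zero_of_collinear {a b c u : E2} (hab : a ≠ b)
    (hu : ⟪u, b - a⟫ = 0) (hcol : Collinear ℝ ({a, b, c} : Set E2)) :
    ⟪u, c - a⟫ = 0 := by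
  rw [collinear_iff_exists_forall_eq_smul_vadd] at hcol
  obtain ⟨p, v, hv⟩ := hcol
  obtain ⟨ta, hta⟩ := hv a (by simp)
  obtain ⟨tb, htb⟩ := hv b (by simp)
  obtain ⟨tc, htc⟩ := hv c (by simp)
  have hba : b - a = (tb - ta) • v := by
    rw [hta, htb]
    simp [sub_smul]
  have hca : c - a = (tc - ta) • v := by
    rw [hta, htc]
    simp [sub_smul]
  have htab : tb - ta ≠ 0 := by
    intro h0
    apply hab
    have : b - a = 0 := by rw [hba, h0, zero_smul]
    have := sub_eq_zero.mp this
    exact this.symm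
  have hv0 : ⟪u, v⟫ = 0 := by
    have h2 := hu
    rw [hba, real_inner_smul_right] at h2
    rcases mul_eq_zero.mp h2 with h3 | h3
    · exact absurd h3 htab
    · exact h3
  rw [hca, real_inner_smul_right, hv0, mul_zero]

set_option maxHeartbeats 1000000 in
private lemma angle_le_of_outside {a b c x o u : E2} {r : ℝ} (hab : a ≠ b)
    (hu0 : u ≠ 0) (hu : ⟪u, b - a⟫ = 0) (hcs : 0 < ⟪u, c - a⟫) (hxs : 0 < ⟪u, x - a⟫)
    (hao : dist a o = r) (hbo : dist b o = r) (hco : dist c o = r) (hxo : r ≤ dist x o) :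
    EuclideanGeometry.angle a x b ≤ EuclideanGeometry.angle a c b := by
  have hba : b - a ≠ 0 := sub_ne_zero.mpr (Ne.symm hab)
  set L : ℝ := ‖b - a‖ with hLdef
  have hL : 0 < L := norm_pos_iff.mpr hba
  set e₁ : E2 := L⁻¹ • (b - a) with he₁def
  set e₂ : E2 := ‖u‖⁻¹ • u with he₂def
  have hnu : 0 < ‖u‖ := norm_pos_iff.mpr hu0
  have h1 : ‖e₁‖ = 1 := norm_smul_inv_norm hba
  have h2 : ‖e₂‖ = 1 := norm_smul_inv_norm hu0
  have h12 : ⟪e₁, e₂⟫ = 0 := by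
    rw [he₁def, he₂def, real_inner_smul_left, real_inner_smul_right, real_inner_comm, hu]
    ring
  have key := inner_expand h1 h2 h12
  set X : E2 → ℝ := fun p => ⟪e₁, p - a⟫ with hX
  set Y : E2 → ℝ := fun p => ⟪e₂, p - a⟫ with hY
  have hXa : X a = 0 := by show ⟪e₁, a - a⟫ = 0; rw [sub_self, inner_zero_right]
  have hYa : Y a = 0 := by show ⟪e₂, a - a⟫ = 0; rw [sub_self, inner_zero_right]
  have hXb : X b = L := by
    show ⟪e₁, b - a⟫ = L
    rw [he₁def, real_inner_smul_left, real_inner_self_eq_norm_sq]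
    field_simp
    ring
  have hYb : Y b = 0 := by
    show ⟪e₂, b - a⟫ = 0
    rw [he₂def, real_inner_smul_left, hu]; ring
  have hYc : 0 < Y c := by
    show 0 < ⟪e₂, c - a⟫
    rw [he₂def, real_inner_smul_left]
    exact mul_pos (inv_pos.mpr hnu) hcs
  have hYx : 0 < Y x := by
    show 0 < ⟪e₂, x - a⟫
    rw [he₂def, real_inner_smul_left]
    exact mul_pos (inv_pos.mpr hnu) hxs
  have coordin : ∀ p q z : E2, ⟪p - z, q - z⟫
      = (X p - X z)*(X q - X z) + (Y p - Y z)*(Y q - Y z) := by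
    intro p q z
    have e1 : ⟪e₁, p - z⟫ = X p - X z := by
      show _ = ⟪e₁, p - a⟫ - ⟪e₁, z - a⟫
      rw [← inner_sub_right]
      congr 1
      abel
    have e2 : ⟪e₂, p - z⟫ = Y p - Y z := by
      show _ = ⟪e₂, p - a⟫ - ⟪e₂, z - a⟫
      rw [← inner_sub_right]
      congr 1
      abel
    have e3 : ⟪e₁, q - z⟫ = X q - X z := by
      show _ = ⟪e₁, q - a⟫ - ⟪e₁, z - a⟫
      rw [← inner_sub_right]; congr 1; abel
    have e4 : ⟪e₂, q - z⟫ = Y q - Y z := by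
      show _ = ⟪e₂, q - a⟫ - ⟪e₂, z - a⟫
      rw [← inner_sub_right]; congr 1; abel
    rw [key (p - z) (q - z), e1, e2, e3, e4]
  have normsq : ∀ p z : E2, ‖p - z‖^2 = (X p - X z)^2 + (Y p - Y z)^2 := by
    intro p z
    rw [← real_inner_self_eq_norm_sq, coordin]
    ring
  have hr0 : 0 ≤ r := hao ▸ dist_nonneg
  have hdsq : ∀ p z : E2, dist p z ^ 2 = (X p - X z)^2 + (Y p - Y z)^2 := by
    intro p z
    rw [dist_eq_norm]
    exact normsq p z
  have q1 : (X o)^2 + (Y o)^2 = r^2 := by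
    have h := hdsq a o
    rw [hao, hXa, hYa] at h
    nlinarith [h]
  have q2 : (L - X o)^2 + (Y o)^2 = r^2 := by
    have h := hdsq b o
    rw [hbo, hXb, hYb] at h
    nlinarith [h]
  have q3 : (X c - X o)^2 + (Y c - Y o)^2 = r^2 := by
    have h := hdsq c o
    rw [hco] at h
    linarith [h]
  have q4 : r^2 ≤ (X x - X o)^2 + (Y x - Y o)^2 := by
    have h := hdsq x o
    rw [← h]
    have := dist_nonneg (x := x) (y := o)
    nlinarith [hxo]
  have ho₁ : X o = L / 2 := by nlinarith [q1, q2]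
  have hangle : ∀ z : E2, EuclideanGeometry.angle a z b
      = Real.arccos ((X z^2 - L*X z + Y z^2)
        / Real.sqrt ((X z^2 - L*X z + Y z^2)^2 + L^2 * (Y z)^2)) := by
    intro z
    unfold EuclideanGeometry.angle InnerProductGeometry.angle
    congr 1
    have hnum : ⟪a -ᵥ z, b -ᵥ z⟫ = X z^2 - L*X z + Y z^2 := by
      rw [vsub_eq_sub, vsub_eq_sub, coordin a b z, hXa, hYa, hXb, hYb]
      ring
    have hd1 : ‖a -ᵥ z‖ = Real.sqrt ((X z)^2 + (Y z)^2) := by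
      rw [vsub_eq_sub, ← Real.sqrt_sq (norm_nonneg (a - z)), normsq a z, hXa, hYa]
      congr 1
      ring
    have hd2 : ‖b -ᵥ z‖ = Real.sqrt ((L - X z)^2 + (Y z)^2) := by
      rw [vsub_eq_sub, ← Real.sqrt_sq (norm_nonneg (b - z)), normsq b z, hXb, hYb]
      congr 1
      ring
    rw [hnum, hd1, hd2, ← Real.sqrt_mul (by positivity)]
    congr 2
    ring
  rw [hangle x, hangle c]
  apply arccos_anti
  rw [ho₁] at q1 q3 q4
  have hSc : X c^2 - L*X c + Y c^2 = 2*(Y o)*(Y c) := by linear_combination q3 - q1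
  have hSx : 2*(Y o)*(Y x) ≤ X x^2 - L*X x + Y x^2 := by
    have expand : (X x - L/2)^2 + (Y x - Y o)^2
        = (X x^2 - L*X x + Y x^2) - 2*(Y o)*(Y x) + ((L/2)^2 + (Y o)^2) := by ring
    linarith [q4, q1, expand]
  have hlhs : (X c^2 - L*X c + Y c^2)
      / Real.sqrt ((X c^2 - L*X c + Y c^2)^2 + L^2 * (Y c)^2)
      = 2*(Y o) / Real.sqrt (L^2 + 4*(Y o)^2) := by
    rw [hSc]
    rw [show (2*(Y o)*(Y c))^2 + L^2*(Y c)^2 = (Y c)^2 * (L^2 + 4*(Y o)^2) by ring,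
      Real.sqrt_mul (sq_nonneg (Y c)), Real.sqrt_sq hYc.le]
    rw [mul_comm (Y c) (Real.sqrt (L^2 + 4*(Y o)^2))]
    rw [show 2*(Y o)*(Y c) = (2*(Y o))*(Y c) by ring, mul_div_mul_right _ _ (ne_of_gt hYc)]
  rw [hlhs]
  exact l2_ineq L (Y o) _ (Y x) hL hYx hSx

private lemma cross_zero (C d t₁ t₂ : ℝ) (h12 : t₁ ≤ t₂)
    (hprod : (C - 2*t₁*d) * (C - 2*t₂*d) ≤ 0) :
    ∃ s, t₁ ≤ s ∧ s ≤ t₂ ∧ C - 2*s*d = 0 := by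
  have hcont : ContinuousOn (fun t : ℝ => C - 2*t*d) (Set.Icc t₁ t₂) := by
    apply Continuous.continuousOn
    continuity
  rcases lt_trichotomy (C - 2*t₁*d) 0 with h1 | h1 | h1
  · have h2 : 0 ≤ C - 2*t₂*d := by nlinarith
    obtain ⟨s, hs, hs0⟩ := intermediate_value_Icc h12 hcont ⟨h1.le, h2⟩
    exact ⟨s, hs.1, hs.2, hs0⟩
  · exact ⟨t₁, le_refl _, h12, h1⟩
  · have h2 : C - 2*t₂*d ≤ 0 := by nlinarith
    obtain ⟨s, hs, hs0⟩ := intermediate_value_Icc' h12 hcont ⟨h2, h1.le⟩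
    exact ⟨s, hs.1, hs.2, hs0⟩


set_option maxHeartbeats 2000000 in
private lemma key_step (A : Set (EuclideanSpace ℝ (Fin 2)))
    (hlf : IsLocallyFinite2 A) (hcd : IsCoarselyDense2 A) (hgen : IsGeneric2 A)
    (ℓ : ℕ) {θ : ℝ} (hθ : θ ∈ angleSet A ℓ) :
    ∃ θ' ∈ angleSet A (ℓ+1), θ' ≤ θ := by
  obtain ⟨a, b, c, o, r, ha, hb, hc, hab, hac, hbc, hncol, hao, hbo, hco, hEfin, hEcard, hθeq⟩ := hθ
  have hr0 : 0 ≤ r := hao ▸ dist_nonneg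
  have hba : b - a ≠ 0 := sub_ne_zero.mpr (Ne.symm hab)
  have hn : (0:ℝ) < ⟪b - a, b - a⟫ := by
    rw [real_inner_self_eq_norm_sq]
    have := norm_pos_iff.mpr hba
    positivity
  set u : E2 := (c - a) - (⟪b - a, c - a⟫ / ⟪b - a, b - a⟫) • (b - a) with hudef
  have hu : ⟪u, b - a⟫ = 0 := by
    rw [hudef, inner_sub_left, real_inner_smul_left, real_inner_comm (c-a) (b-a),
      div_mul_cancel₀ _ hn.ne', sub_self]
  have hu0 : u ≠ 0 := by
    intro h0
    apply hncol
    apply collinear_of_eq_smul (⟪b - a, c - a⟫ / ⟪b - a, b - a⟫)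
    have h1 : c - a - (⟪b - a, c - a⟫ / ⟪b - a, b - a⟫) • (b - a) = 0 := h0
    linear_combination (norm := module) h1
  have hca : 0 < ⟪u, c - a⟫ := by
    have hself : 0 < ⟪u, u⟫ := by
      rw [real_inner_self_eq_norm_sq]
      have := norm_pos_iff.mpr hu0
      positivity
    have hrw : c - a = u + (⟪b - a, c - a⟫ / ⟪b - a, b - a⟫) • (b - a) := by
      rw [hudef]; abel
    calc (0:ℝ) < ⟪u, u⟫ := hself
      _ = ⟪u, c - a⟫ := by
          conv_rhs => rw [hrw]
          rw [inner_add_right, real_inner_smul_right, hu, mul_zero, add_zero]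
  -- the quadratic membership function
  have hsq : ∀ (p : E2) (t : ℝ), dist p (o + t•u)^2
      = dist a (o + t•u)^2 + ((dist p o)^2 - r^2 - 2*t*⟪u, p - a⟫) := by
    intro p t
    have h1 : ⟪p - o, t•u⟫ = t * ⟪u, p - o⟫ := by
      rw [real_inner_smul_right, real_inner_comm]
    have h2 : ⟪a - o, t•u⟫ = t * ⟪u, a - o⟫ := by
      rw [real_inner_smul_right, real_inner_comm]
    have h3 : ⟪u, p - o⟫ - ⟪u, a - o⟫ = ⟪u, p - a⟫ := by
      rw [← inner_sub_right]
      congr 1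
      abel
    have hr : ‖a - o‖^2 = r^2 := by
      rw [← dist_eq_norm, hao]
    have hL : dist p (o + t•u) ^2 = ‖p - o‖^2 - 2*(t * ⟪u, p - o⟫) + ‖t•u‖^2 := by
      rw [dist_eq_norm, show p - (o + t•u) = (p - o) - t•u from by abel, norm_sub_sq_real, h1]
    have hR : dist a (o + t•u) ^2 = ‖a - o‖^2 - 2*(t * ⟪u, a - o⟫) + ‖t•u‖^2 := by
      rw [dist_eq_norm, show a - (o + t•u) = (a - o) - t•u from by abel, norm_sub_sq_real, h2]
    have hpo : dist p o ^2 = ‖p - o‖^2 := by rw [dist_eq_norm]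
    rw [hL, hR, hpo]
    linear_combination (-1 : ℝ)*hr + (-2*t)*h3
  have mem_iff : ∀ (p : E2) (t : ℝ), (dist p (o + t•u) < dist a (o + t•u))
      ↔ (dist p o)^2 - r^2 - 2*t*⟪u, p - a⟫ < 0 := by
    intro p t
    constructor
    · intro h
      have hd := dist_nonneg (x := p) (y := o + t•u)
      have hd' := dist_nonneg (x := a) (y := o + t•u)
      nlinarith [hsq p t]
    · intro h
      have hd := dist_nonneg (x := p) (y := o + t•u)
      have hd' := dist_nonneg (x := a) (y := o + t•u)
      nlinarith [hsq p t]
  have eq_iff : ∀ (p : E2) (t : ℝ), (dist p (o + t•u) = dist a (o + t•u))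
      ↔ (dist p o)^2 - r^2 - 2*t*⟪u, p - a⟫ = 0 := by
    intro p t
    constructor
    · intro h
      have h2 := hsq p t
      rw [h] at h2
      linarith
    · intro h
      have h2 : dist p (o + t•u)^2 = dist a (o + t•u)^2 := by linarith [hsq p t]
      have hd := dist_nonneg (x := p) (y := o + t•u)
      have hd' := dist_nonneg (x := a) (y := o + t•u)
      nlinarith [h2]
  have gb : ∀ t : ℝ, (dist b o)^2 - r^2 - 2*t*⟪u, b - a⟫ = 0 := by
    intro t
    rw [hbo, hu]
    ring
  have gaa : ∀ t : ℝ, (dist a o)^2 - r^2 - 2*t*⟪u, a - a⟫ = 0 := by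
    intro t
    rw [hao]
    simp
  have fc : (dist c o)^2 - r^2 = 0 := by rw [hco]; ring
  have excl : ∀ (t : ℝ) (p q : E2), p ∈ A → q ∈ A → p ≠ q → p ≠ a → p ≠ b → q ≠ a → q ≠ b →
      (dist p o)^2 - r^2 - 2*t*⟪u, p - a⟫ = 0 → (dist q o)^2 - r^2 - 2*t*⟪u, q - a⟫ = 0 →
      False := by
    intro t p q hpA hqA hpq hpa hpb hqa hqb hp hq
    refine hgen a b p q ha hb hpA hqA hab (Ne.symm hpa) (Ne.symm hqa) (Ne.symm hpb)
      (Ne.symm hqb) hpq ⟨o + t•u, dist a (o + t•u), rfl, ?_, ?_, ?_⟩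
    · exact (eq_iff b t).mpr (gb t)
    · exact (eq_iff p t).mpr hp
    · exact (eq_iff q t).mpr hq
  obtain ⟨P, hPsub, hPfin, hPcard⟩ := (hcd u hu0 (⟪u, a⟫ + 1)).exists_subset_ncard_eq (ℓ+2)
  have hP1 : ∀ p ∈ P, 1 ≤ ⟪u, p - a⟫ := by
    intro p hp
    have h1 := (hPsub hp).2
    rw [inner_sub_right]
    linarith
  obtain ⟨M, hM⟩ := (hPfin.image (fun p => (dist p o)^2 - r^2)).bddAbove
  set T : ℝ := max 1 (M/2 + 1) with hTdef
  have hT1 : 1 ≤ T := le_max_left _ _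
  have hPT : ∀ p ∈ P, (dist p o)^2 - r^2 - 2*T*⟪u, p - a⟫ < 0 := by
    intro p hp
    have h1 : (dist p o)^2 - r^2 ≤ M := hM (Set.mem_image_of_mem _ hp)
    have h2 := hP1 p hp
    have h3 : M/2 + 1 ≤ T := le_max_right _ _
    nlinarith
  set F : Set E2 := {p ∈ A | dist p o ≤ r + 2*T*‖u‖} with hFdef
  have hF : F.Finite := hlf o _
  have hDF : ∀ t : ℝ, 0 ≤ t → t ≤ T → ∀ p ∈ A,
      dist p (o + t•u) < dist a (o + t•u) → p ∈ F := by
    intro t ht0 htT p hpA hlt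
    refine ⟨hpA, ?_⟩
    have hd1 : dist p o ≤ dist p (o + t•u) + dist (o + t•u) o := dist_triangle _ _ _
    have hd2 : dist a (o + t•u) ≤ dist a o + dist o (o + t•u) := dist_triangle _ _ _
    have hd3 : dist (o + t•u) o = t * ‖u‖ := by
      rw [dist_eq_norm, show o + t•u - o = t•u from by abel, norm_smul]
      simp [abs_of_nonneg ht0]
    have hd4 : dist o (o + t•u) = t * ‖u‖ := by rw [dist_comm]; exact hd3
    have hun : 0 ≤ ‖u‖ := norm_nonneg u
    have h5 : t * ‖u‖ ≤ T * ‖u‖ := mul_le_mul_of_nonneg_right htT hun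
    rw [hao] at hd2
    linarith
  set 𝒯 : Set ℝ := (fun p => ((dist p o)^2 - r^2) / (2*⟪u, p - a⟫)) ''
    {p ∈ F | ⟪u, p - a⟫ ≠ 0} with h𝒯def
  have h𝒯fin : 𝒯.Finite := Set.Finite.image _ (hF.subset (Set.sep_subset _ _))
  have hev : ∀ p ∈ F, ⟪u, p - a⟫ ≠ 0 → ∀ t : ℝ,
      (dist p o)^2 - r^2 - 2*t*⟪u, p - a⟫ = 0 → t ∈ 𝒯 := by
    intro p hp hphi t ht
    refine ⟨p, ⟨hp, hphi⟩, ?_⟩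
    show ((dist p o)^2 - r^2) / (2*⟪u, p - a⟫) = t
    rw [div_eq_iff (by simpa using hphi : 2*⟪u, p - a⟫ ≠ 0)]
    linarith
  set ε : ℝ := sInf (insert T (𝒯 ∩ Set.Ioi 0)) with hεdef
  have hins_fin : (insert T (𝒯 ∩ Set.Ioi 0)).Finite := (h𝒯fin.inter_of_left _).insert T
  have hεmem : ε ∈ insert T (𝒯 ∩ Set.Ioi 0) :=
    Set.Nonempty.csInf_mem (Set.insert_nonempty _ _) hins_fin
  have hεpos : 0 < ε := by
    rcases hεmem with h | h
    · rw [h]; linarith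
    · exact h.2
  have hεT : ε ≤ T := csInf_le hins_fin.bddBelow (Set.mem_insert _ _)
  have hεle : ∀ s ∈ 𝒯, 0 < s → ε ≤ s := fun s hs hs0 =>
    csInf_le hins_fin.bddBelow (Set.mem_insert_of_mem _ ⟨hs, hs0⟩)
  have small : ∀ t : ℝ, 0 < t → t < ε →
      {p ∈ A | dist p (o + t•u) < dist a (o + t•u)}
        = insert c {p ∈ A | dist p o < r} := by
    intro t ht0 htε
    ext p
    simp only [Set.mem_insert_iff, Set.mem_setOf_eq]
    constructor
    · rintro ⟨hpA, hplt⟩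
      have hg := (mem_iff p t).mp hplt
      by_cases hf : (dist p o)^2 - r^2 < 0
      · right
        refine ⟨hpA, ?_⟩
        have hd := dist_nonneg (x := p) (y := o)
        nlinarith
      · push_neg at hf
        have hphi : 0 < ⟪u, p - a⟫ := by nlinarith
        have hpa : p ≠ a := by
          intro h
          rw [h, sub_self, inner_zero_right] at hphi
          exact lt_irrefl 0 hphi
        have hpb : p ≠ b := by
          intro h
          rw [h, hu] at hphi
          exact lt_irrefl 0 hphi
        have hpF : p ∈ F := hDF t ht0.le (le_trans htε.le hεT) p hpA hplt
        by_cases hfp0 : (dist p o)^2 - r^2 = 0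
        · left
          by_contra hpc
          refine excl 0 p c hpA hc hpc hpa hpb (Ne.symm hac) (Ne.symm hbc) ?_ ?_
          · linarith
          · linarith
        · exfalso
          have hfp : 0 < (dist p o)^2 - r^2 := lt_of_le_of_ne hf (Ne.symm hfp0)
          have hs𝒯 : ((dist p o)^2 - r^2)/(2*⟪u, p - a⟫) ∈ 𝒯 :=
            ⟨p, ⟨hpF, ne_of_gt hphi⟩, rfl⟩
          have hs0 : 0 < ((dist p o)^2 - r^2)/(2*⟪u, p - a⟫) :=
            div_pos hfp (by linarith)
          have hsε := hεle _ hs𝒯 hs0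
          have heq : (dist p o)^2 - r^2 = ((dist p o)^2 - r^2)/(2*⟪u, p - a⟫) * (2*⟪u, p - a⟫) := by
            rw [div_mul_cancel₀]
            intro h0
            linarith
          nlinarith
    · rintro (rfl | ⟨hpA, hplt⟩)
      · refine ⟨hc, (mem_iff p t).mpr ?_⟩
        nlinarith
      · refine ⟨hpA, (mem_iff p t).mpr ?_⟩
        have hd := dist_nonneg (x := p) (y := o)
        have hf : (dist p o)^2 - r^2 < 0 := by nlinarith
        rcases le_or_gt 0 ⟪u, p - a⟫ with hphi | hphi
        · nlinarith
        · have hpF : p ∈ F := by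
            refine hDF 0 le_rfl (by linarith) p hpA ((mem_iff p 0).mpr ?_)
            nlinarith
          have hs𝒯 : ((dist p o)^2 - r^2)/(2*⟪u, p - a⟫) ∈ 𝒯 :=
            ⟨p, ⟨hpF, ne_of_lt hphi⟩, rfl⟩
          have hs0 : 0 < ((dist p o)^2 - r^2)/(2*⟪u, p - a⟫) :=
            div_pos_of_neg_of_neg hf (by linarith)
          have hsε := hεle _ hs𝒯 hs0
          have heq : (dist p o)^2 - r^2 = ((dist p o)^2 - r^2)/(2*⟪u, p - a⟫) * (2*⟪u, p - a⟫) := by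
            rw [div_mul_cancel₀]
            intro h0
            linarith
          nlinarith
  have hcE : c ∉ {p ∈ A | dist p o < r} := by
    rintro ⟨-, hlt⟩
    rw [hco] at hlt
    exact lt_irrefl r hlt
  have hcard_small : ∀ t : ℝ, 0 < t → t < ε →
      {p ∈ A | dist p (o + t•u) < dist a (o + t•u)}.ncard = ℓ+1 := by
    intro t ht0 htε
    rw [small t ht0 htε, Set.ncard_insert_of_notMem hcE hEfin, hEcard]
  have Din_fin : ∀ t : ℝ, 0 ≤ t → t ≤ T →
      {p ∈ A | dist p (o + t•u) < dist a (o + t•u)}.Finite := by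
    intro t ht0 htT
    exact hF.subset (fun p hp => hDF t ht0 htT p hp.1 hp.2)
  set W : Set ℝ := {t : ℝ | 0 < t ∧ t ≤ T ∧
    ℓ+2 ≤ {p ∈ A | dist p (o + t•u) < dist a (o + t•u)}.ncard} with hWdef
  have hTW : T ∈ W := by
    refine ⟨by linarith, le_rfl, ?_⟩
    have hsub : P ⊆ {p ∈ A | dist p (o + T•u) < dist a (o + T•u)} :=
      fun p hp => ⟨(hPsub hp).1, (mem_iff p T).mpr (hPT p hp)⟩
    calc ℓ+2 = P.ncard := hPcard.symm
      _ ≤ _ := Set.ncard_le_ncard hsub (Din_fin T (by linarith) le_rfl)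
  have hWlow : ∀ t ∈ W, ε ≤ t := by
    rintro t ⟨ht0, htT, hcard⟩
    by_contra hlt
    push_neg at hlt
    rw [hcard_small t ht0 hlt] at hcard
    omega
  have hWne : W.Nonempty := ⟨T, hTW⟩
  have hWbdd : BddBelow W := ⟨0, fun t ht => ht.1.le⟩
  set t₀ : ℝ := sInf W with ht₀def
  have ht₀ε : ε ≤ t₀ := le_csInf hWne hWlow
  have ht₀T : t₀ ≤ T := csInf_le hWbdd hTW
  have ht₀pos : 0 < t₀ := lt_of_lt_of_le hεpos ht₀ε
  -- the gap δ
  set Dset : Set ℝ := (fun s => |s - t₀|) '' (𝒯 \ {t₀}) with hDsetdef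
  have hDfin : (insert ε Dset).Finite := ((h𝒯fin.subset (Set.diff_subset)).image _).insert ε
  set δ₀ : ℝ := sInf (insert ε Dset) with hδ₀def
  have hδ₀mem : δ₀ ∈ insert ε Dset := Set.Nonempty.csInf_mem (Set.insert_nonempty _ _) hDfin
  have hδ₀pos : 0 < δ₀ := by
    rcases hδ₀mem with h | ⟨s, hs, h⟩
    · rw [h]; exact hεpos
    · rw [← h]
      rcases abs_pos.mpr (sub_ne_zero.mpr hs.2) with h2
      exact h2
  have hδ₀ε : δ₀ ≤ ε := csInf_le hDfin.bddBelow (Set.mem_insert _ _)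
  set δ : ℝ := δ₀ / 2 with hδdef
  have hδpos : 0 < δ := by positivity
  have hδε : δ < ε := by
    rw [hδdef]
    linarith
  have hδev : ∀ s ∈ 𝒯, |s - t₀| ≤ δ → s = t₀ := by
    intro s hs habs
    by_contra hne
    have hmem : |s - t₀| ∈ Dset := ⟨s, ⟨hs, hne⟩, rfl⟩
    have h1 : δ₀ ≤ |s - t₀| := csInf_le hDfin.bddBelow (Set.mem_insert_of_mem _ hmem)
    rw [hδdef] at habs
    linarith
  set τ : ℝ := t₀ - δ with hτdef
  have hτ0 : 0 < τ := by rw [hτdef]; linarith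
  have hτT : τ ≤ T := by rw [hτdef]; linarith
  have hτW : τ ∉ W := by
    intro h
    have := csInf_le hWbdd h
    rw [← ht₀def] at this
    rw [hτdef] at this
    linarith
  have hτcard : {p ∈ A | dist p (o + τ•u) < dist a (o + τ•u)}.ncard ≤ ℓ+1 := by
    by_contra hcon
    push_neg at hcon
    exact hτW ⟨hτ0, hτT, hcon⟩
  obtain ⟨w, hwW, hwlt⟩ : ∃ w ∈ W, w < t₀ + δ := by
    by_contra hcon
    push_neg at hcon
    have : t₀ + δ ≤ t₀ := by
      rw [ht₀def]
      exact le_csInf hWne hcon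
    linarith
  have hw0 : t₀ ≤ w := csInf_le hWbdd hwW
  have hτw : τ ≤ w := by rw [hτdef]; linarith
  have hwT : w ≤ T := hwW.2.1
  -- any sign change within [tau, w] happens exactly at t0
  have tzero : ∀ p ∈ F, ⟪u, p - a⟫ ≠ 0 → ∀ s : ℝ, τ ≤ s → s ≤ w →
      (dist p o)^2 - r^2 - 2*s*⟪u, p - a⟫ = 0 → s = t₀ := by
    intro p hpF hphi s hs1 hs2 hg0
    refine hδev s (hev p hpF hphi s hg0) ?_
    rw [abs_le]
    constructor
    · rw [hτdef] at hs1; linarith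
    · linarith
  have enter : ∀ p : E2, p ∈ A →
      dist p (o + w•u) < dist a (o + w•u) →
      ¬ (dist p (o + τ•u) < dist a (o + τ•u)) →
      ((dist p o)^2 - r^2 - 2*t₀*⟪u, p - a⟫ = 0 ∧ 0 < ⟪u, p - a⟫ ∧ p ≠ a ∧ p ≠ b ∧ t₀ < w) := by
    intro p hpA hpw hpτ
    have hgw : (dist p o)^2 - r^2 - 2*w*⟪u, p - a⟫ < 0 := (mem_iff p w).mp hpw
    have hgτ : 0 ≤ (dist p o)^2 - r^2 - 2*τ*⟪u, p - a⟫ := by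
      by_contra hcon
      push_neg at hcon
      exact hpτ ((mem_iff p τ).mpr hcon)
    have hphi : ⟪u, p - a⟫ ≠ 0 := by
      intro h0
      rw [h0] at hgw hgτ
      linarith
    have hpF : p ∈ F := hDF w (by linarith) hwT p hpA hpw
    obtain ⟨s, hs1, hs2, hs0⟩ := cross_zero _ _ τ w hτw
      (mul_nonpos_of_nonneg_of_nonpos hgτ hgw.le)
    have hst : s = t₀ := tzero p hpF hphi s hs1 hs2 hs0
    rw [hst] at hs0 hs2
    have htw : t₀ < w := by
      rcases lt_or_eq_of_le hw0 with h | h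
      · exact h
      · exfalso
        rw [← h] at hgw
        linarith
    have hphipos : 0 < ⟪u, p - a⟫ := by
      rcases lt_or_gt_of_ne hphi with h | h
      · exfalso
        nlinarith
      · exact h
    have hpa : p ≠ a := by
      intro h
      rw [h, sub_self, inner_zero_right] at hphipos
      exact lt_irrefl 0 hphipos
    have hpb : p ≠ b := by
      intro h
      rw [h, hu] at hphipos
      exact lt_irrefl 0 hphipos
    exact ⟨hs0, hphipos, hpa, hpb, htw⟩
  have hnotsub : ¬ ({p ∈ A | dist p (o + w•u) < dist a (o + w•u)}
      ⊆ {p ∈ A | dist p (o + τ•u) < dist a (o + τ•u)}) := by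
    intro hsub
    have h1 := Set.ncard_le_ncard hsub (Din_fin τ hτ0.le hτT)
    have h2 := hwW.2.2
    omega
  obtain ⟨p₀, hp₀w, hp₀τ⟩ := Set.not_subset.mp hnotsub
  have hp₀A : p₀ ∈ A := hp₀w.1
  have hp₀τ' : ¬ (dist p₀ (o + τ•u) < dist a (o + τ•u)) := by
    intro h
    exact hp₀τ ⟨hp₀A, h⟩
  obtain ⟨hp₀g, hp₀phi, hp₀a, hp₀b, htw⟩ := enter p₀ hp₀A hp₀w.2 hp₀τ'
  -- a leaver would be a second toggler
  have leaver : ∀ p : E2, p ∈ A →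
      dist p (o + τ•u) < dist a (o + τ•u) →
      ¬ (dist p (o + w•u) < dist a (o + w•u)) → False := by
    intro p hpA hpτ hpw
    have hgτ : (dist p o)^2 - r^2 - 2*τ*⟪u, p - a⟫ < 0 := (mem_iff p τ).mp hpτ
    have hgw : 0 ≤ (dist p o)^2 - r^2 - 2*w*⟪u, p - a⟫ := by
      by_contra hcon
      push_neg at hcon
      exact hpw ((mem_iff p w).mpr hcon)
    have hphi : ⟪u, p - a⟫ ≠ 0 := by
      intro h0
      rw [h0] at hgw hgτ
      linarith
    have hpF : p ∈ F := hDF τ hτ0.le hτT p hpA hpτ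
    obtain ⟨s, hs1, hs2, hs0⟩ := cross_zero _ _ τ w hτw
      (by nlinarith : ((dist p o)^2 - r^2 - 2*τ*⟪u, p - a⟫) * ((dist p o)^2 - r^2 - 2*w*⟪u, p - a⟫) ≤ 0)
    have hst : s = t₀ := tzero p hpF hphi s hs1 hs2 hs0
    rw [hst] at hs0
    have hpa : p ≠ a := by
      intro h
      rw [h] at hgτ
      have := gaa τ
      linarith
    have hpb : p ≠ b := by
      intro h
      rw [h] at hgτ
      have := gb τ
      linarith
    have hpp₀ : p ≠ p₀ := by
      intro h
      rw [h] at hpτ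
      exact hp₀τ' hpτ
    exact excl t₀ p p₀ hpA hp₀A hpp₀ hpa hpb hp₀a hp₀b hs0 hp₀g
  have hτsubw : {p ∈ A | dist p (o + τ•u) < dist a (o + τ•u)}
      ⊆ {p ∈ A | dist p (o + w•u) < dist a (o + w•u)} := by
    rintro p ⟨hpA, hp⟩
    refine ⟨hpA, ?_⟩
    by_contra hcon
    exact leaver p hpA hp hcon
  have hSw_eq : {p ∈ A | dist p (o + w•u) < dist a (o + w•u)}
      = insert p₀ {p ∈ A | dist p (o + τ•u) < dist a (o + τ•u)} := by
    ext p
    simp only [Set.mem_insert_iff, Set.mem_setOf_eq]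
    constructor
    · rintro ⟨hpA, hp⟩
      by_cases hpτ2 : dist p (o + τ•u) < dist a (o + τ•u)
      · exact Or.inr ⟨hpA, hpτ2⟩
      · left
        by_contra hne
        obtain ⟨hg1, hphi1, hpa1, hpb1, -⟩ := enter p hpA hp hpτ2
        exact excl t₀ p p₀ hpA hp₀A hne hpa1 hpb1 hp₀a hp₀b hg1 hp₀g
    · rintro (rfl | ⟨hpA, hp⟩)
      · exact hp₀w
      · exact hτsubw ⟨hpA, hp⟩
  have hτfin := Din_fin τ hτ0.le hτT
  have hcardw : {p ∈ A | dist p (o + w•u) < dist a (o + w•u)}.ncard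
      = {p ∈ A | dist p (o + τ•u) < dist a (o + τ•u)}.ncard + 1 := by
    rw [hSw_eq, Set.ncard_insert_of_notMem hp₀τ hτfin]
  have hcardτ : {p ∈ A | dist p (o + τ•u) < dist a (o + τ•u)}.ncard = ℓ+1 := by
    have h2 := hwW.2.2
    omega
  -- the disk at time t₀ agrees with the disk at time τ
  have hS₀ : {p ∈ A | dist p (o + t₀•u) < dist a (o + t₀•u)}
      = {p ∈ A | dist p (o + τ•u) < dist a (o + τ•u)} := by
    have hτt₀ : τ ≤ t₀ := by rw [hτdef]; linarith
    ext p
    simp only [Set.mem_setOf_eq]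
    constructor
    · rintro ⟨hpA, hp⟩
      refine ⟨hpA, ?_⟩
      have hg0 : (dist p o)^2 - r^2 - 2*t₀*⟪u, p - a⟫ < 0 := (mem_iff p t₀).mp hp
      by_contra hcon
      have hgτ : 0 ≤ (dist p o)^2 - r^2 - 2*τ*⟪u, p - a⟫ := by
        by_contra hcon2
        push_neg at hcon2
        exact hcon ((mem_iff p τ).mpr hcon2)
      have hphi : ⟪u, p - a⟫ ≠ 0 := by
        intro h0
        rw [h0] at hg0 hgτ
        linarith
      have hpF : p ∈ F := hDF t₀ ht₀pos.le ht₀T p hpA hp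
      obtain ⟨s, hs1, hs2, hs0⟩ := cross_zero _ _ τ t₀ hτt₀
        (mul_nonpos_of_nonneg_of_nonpos hgτ hg0.le)
      have hst : s = t₀ := tzero p hpF hphi s hs1 (le_trans hs2 hw0) hs0
      rw [hst] at hs0
      linarith
    · rintro ⟨hpA, hp⟩
      refine ⟨hpA, ?_⟩
      have hgτ : (dist p o)^2 - r^2 - 2*τ*⟪u, p - a⟫ < 0 := (mem_iff p τ).mp hp
      by_contra hcon
      have hg0 : 0 ≤ (dist p o)^2 - r^2 - 2*t₀*⟪u, p - a⟫ := by
        by_contra hcon2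
        push_neg at hcon2
        exact hcon ((mem_iff p t₀).mpr hcon2)
      have hphi : ⟪u, p - a⟫ ≠ 0 := by
        intro h0
        rw [h0] at hg0 hgτ
        linarith
      have hpF : p ∈ F := hDF τ hτ0.le hτT p hpA hp
      obtain ⟨s, hs1, hs2, hs0⟩ := cross_zero _ _ τ t₀ hτt₀
        (mul_nonpos_of_nonpos_of_nonneg hgτ.le hg0)
      have hst : s = t₀ := tzero p hpF hphi s hs1 (le_trans hs2 hw0) hs0
      rw [hst] at hs0
      have hpa : p ≠ a := by
        intro h
        rw [h] at hgτ
        have := gaa τ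
        linarith
      have hpb : p ≠ b := by
        intro h
        rw [h] at hgτ
        have := gb τ
        linarith
      have hpp₀ : p ≠ p₀ := by
        intro h
        rw [h] at hp
        exact hp₀τ' hp
      exact excl t₀ p p₀ hpA hp₀A hpp₀ hpa hpb hp₀a hp₀b hs0 hp₀g
  -- p₀ lies strictly outside the original circle, on the same side as c
  have hfp₀ : 0 < (dist p₀ o)^2 - r^2 := by nlinarith
  have hout : r ≤ dist p₀ o := by
    by_contra hcon
    push_neg at hcon
    have := dist_nonneg (x := p₀) (y := o)
    nlinarith
  have hnc : ¬ Collinear ℝ ({a, b, p₀} : Set E2) := by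
    intro hcol
    have := inner_zero_of_collinear hab hu hcol
    linarith
  refine ⟨EuclideanGeometry.angle a p₀ b,
    ⟨a, b, p₀, o + t₀•u, dist a (o + t₀•u), ha, hb, hp₀A, hab, Ne.symm hp₀a, Ne.symm hp₀b,
      hnc, rfl, (eq_iff b t₀).mpr (gb t₀), (eq_iff p₀ t₀).mpr hp₀g,
      by rw [hS₀]; exact hτfin, by rw [hS₀]; exact hcardτ, rfl⟩, ?_⟩
  rw [hθeq]
  exact angle_le_of_outside hab hu0 hu hca hp₀phi hao hbo hco hout

/-- Monotonicity: `α_ℓ(A) ≥ α_{ℓ+1}(A)` for a locally finite, coarsely dense, and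
generic set `A ⊆ ℝ²`. -/
theorem alpha_antitone
    (A : Set (EuclideanSpace ℝ (Fin 2)))
    (hlf : IsLocallyFinite2 A) (hcd : IsCoarselyDense2 A) (hgen : IsGeneric2 A) :
    ∀ ℓ : ℕ, alphaInf A (ℓ + 1) ≤ alphaInf A ℓ := by
  intro ℓ
  unfold alphaInf
  have hbdd : BddBelow (insert π (angleSet A (ℓ+1))) := by
    refine ⟨0, ?_⟩
    rintro x (rfl | hx)
    · exact Real.pi_pos.le
    · obtain ⟨a, b, c, o, r, -, -, -, -, -, -, -, -, -, -, -, -, rfl⟩ := hx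
      exact EuclideanGeometry.angle_nonneg _ _ _
  apply le_csInf (Set.insert_nonempty _ _)
  rintro θ (rfl | hθ)
  · exact csInf_le hbdd (Set.mem_insert _ _)
  · obtain ⟨θ', hθ', hle⟩ := key_step A hlf hcd hgen ℓ hθ
    exact le_trans (csInf_le hbdd (Set.mem_insert_of_mem _ hθ')) hle
end

section
/- Let A ⊆ ℝ² be locally finite, coarsely dense, and generic, and define α_ℓ(A) as the infimum of angles ∠acb over triples a,b,c ∈ A whose circumcircle encloses exactly ℓ points of A, and β_ℓ(A) as the infimum of π − ∠acb over the same triples. Then β_ℓ(A) ≥ α_ℓ(A) for every ℓ ≥ 0. -/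
open Real EuclideanGeometry
open scoped RealInnerProductSpace

section AngleSet

variable {A : Set (EuclideanSpace ℝ (Fin 2))} {ℓ : ℕ}

/-- Relabelling `(a, b, c)` as `(b, c, a)` keeps the circumcircle, and
`π - ∠ a c b = ∠ b a c + ∠ c b a ≥ ∠ b a c`. -/
theorem exists_angleSet_angle_le_pi_sub {θ : ℝ} (hθ : θ ∈ angleSet A ℓ) :
    ∃ θ' ∈ angleSet A ℓ, θ' ≤ π - θ := by
  obtain ⟨a, b, c, o, r, ha, hb, hc, hab, hac, hbc, hcol, hao, hbo, hco, hfin, hcard, rfl⟩ := hθ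
  have hperm : ({b, c, a} : Set (EuclideanSpace ℝ (Fin 2))) = {a, b, c} := by
    rw [Set.pair_comm c a, Set.insert_comm b a]
  refine ⟨∠ b a c, ⟨b, c, a, o, r, hb, hc, ha, hbc, hab.symm, hac.symm, hperm ▸ hcol,
    hbo, hco, hao, hfin, hcard, rfl⟩, ?_⟩
  have hsum := angle_add_angle_add_angle_eq_pi b hac.symm
  linarith [angle_nonneg c b a]

theorem bddBelow_insert_pi_angleSet : BddBelow (insert π (angleSet A ℓ)) := by
  refine ⟨0, ?_⟩
  rintro x (rfl | ⟨a, b, c, -, -, -, -, -, -, -, -, -, -, -, -, -, -, rfl⟩)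
  · exact pi_pos.le
  · exact angle_nonneg a c b

end AngleSet

theorem alpha_le_beta_general
    (A : Set (EuclideanSpace ℝ (Fin 2))) :
    ∀ ℓ : ℕ, alphaInf A ℓ ≤ betaInf A ℓ := by
  intro ℓ
  refine le_csInf (Set.insert_nonempty _ _) ?_
  rintro x (rfl | ⟨θ, hθ, rfl⟩)
  · exact csInf_le bddBelow_insert_pi_angleSet (Set.mem_insert _ _)
  · obtain ⟨θ', hθ', hle⟩ := exists_angleSet_angle_le_pi_sub hθ
    exact (csInf_le bddBelow_insert_pi_angleSet (Set.mem_insert_of_mem _ hθ')).trans hle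

/-- For a locally finite, coarsely dense, and generic set `A ⊆ ℝ²`,
`β_ℓ(A) ≥ α_ℓ(A)` for every `ℓ ≥ 0`. -/
theorem alpha_le_beta
    (A : Set (EuclideanSpace ℝ (Fin 2)))
    (hlf : IsLocallyFinite2 A) (hcd : IsCoarselyDense2 A) (hgen : IsGeneric2 A) :
    ∀ ℓ : ℕ, alphaInf A ℓ ≤ betaInf A ℓ :=
  alpha_le_beta_general A
end

section
/- There exists a finite set A ⊆ ℝ² for which α₀(A) < α₁(A), where α_ℓ(A) is the minimum angle ∠acb over triples of points of A whose circumcircle encloses exactly ℓ points of A. Concretely, for A the three vertices of an equilateral triangle together with its barycenter, α₀(A) = π/6 and α₁(A) = π/3. -/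
open Real EuclideanGeometry
open scoped RealInnerProductSpace

/-! Put the barycenter at the origin, so that the vertices are unit vectors with pairwise inner
products `-1/2`. The circumcircle of the triangle is the unit circle, which encloses exactly the
barycenter, so the triangle is the only triple with `ℓ = 1` and all its angles are `π/3`. A circle
through the barycenter and two vertices encloses nothing, since the third vertex lies at distance
`√(3 + r²)` from its centre; such a triangle has angles `π/6, π/6, 2π/3`. -/

section InnerProductSpace

variable {V : Type*} [NormedAddCommGroup V] [InnerProductSpace ℝ V]

lemma inner_eq_neg_half_of_add_add_eq_zero {x y z : V} (hx : ‖x‖ = 1) (hy : ‖y‖ = 1)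
    (hz : ‖z‖ = 1) (hxyz : x + y + z = 0) : ⟪x, y⟫ = -1 / 2 := by
  have hxy : ‖x + y‖ = 1 := by rw [eq_neg_of_add_eq_zero_left hxyz, norm_neg, hz]
  have := norm_add_sq_real x y
  rw [hxy, hx, hy] at this
  linarith

lemma angle_eq_of_cos_eq {x y : V} {θ : ℝ} (h0 : 0 ≤ θ) (hπ : θ ≤ π)
    (h : ⟪x, y⟫ / (‖x‖ * ‖y‖) = cos θ) : InnerProductGeometry.angle x y = θ := by
  rw [InnerProductGeometry.angle, h, arccos_cos h0 hπ]

lemma not_collinear_of_angle_pos_of_lt_pi {a b c : V} (hab : a ≠ b) (hcb : c ≠ b)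
    (h0 : 0 < ∠ a b c) (hπ : ∠ a b c < π) : ¬ Collinear ℝ ({a, b, c} : Set V) := by
  rw [collinear_iff_eq_or_eq_or_angle_eq_zero_or_angle_eq_pi]
  rintro (h | h | h | h)
  exacts [hab h, hcb h, h0.ne' h, hπ.ne h]

end InnerProductSpace

section UnitEquilateral

variable {V : Type*} [NormedAddCommGroup V]

/-- The vertices of an equilateral triangle inscribed in the unit circle about the origin. -/
structure IsUnitEquilateral (u v w : V) : Prop where
  norm_left : ‖u‖ = 1
  norm_mid : ‖v‖ = 1
  norm_right : ‖w‖ = 1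
  add_add : u + v + w = 0

namespace IsUnitEquilateral

variable {u v w x y z o : V} {r : ℝ}

lemma rotate (h : IsUnitEquilateral u v w) : IsUnitEquilateral v w u :=
  ⟨h.norm_mid, h.norm_right, h.norm_left, by rw [← h.add_add]; abel⟩

lemma norm_of_mem (h : IsUnitEquilateral u v w) (hx : x ∈ ({u, v, w} : Set V)) : ‖x‖ = 1 := by
  rcases hx with rfl | rfl | rfl
  exacts [h.norm_left, h.norm_mid, h.norm_right]

lemma ne_zero_of_mem (h : IsUnitEquilateral u v w) (hx : x ∈ ({u, v, w} : Set V)) : x ≠ 0 :=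
  norm_ne_zero_iff.mp (by rw [h.norm_of_mem hx]; exact one_ne_zero)

lemma sep_dist_lt_one_eq_singleton (h : IsUnitEquilateral u v w) :
    {p ∈ insert 0 ({u, v, w} : Set V) | dist p 0 < 1} = {0} := by
  ext p
  simp only [Set.mem_singleton_iff, Set.mem_insert_iff]
  constructor
  · rintro ⟨rfl | hp, hp1⟩
    · rfl
    · rw [dist_zero_right, h.norm_of_mem hp] at hp1
      exact absurd hp1 (lt_irrefl 1)
  · rintro rfl
    simp

variable [InnerProductSpace ℝ V]

lemma inner_left_mid (h : IsUnitEquilateral u v w) : ⟪u, v⟫ = -1 / 2 :=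
  inner_eq_neg_half_of_add_add_eq_zero h.norm_left h.norm_mid h.norm_right h.add_add

lemma left_ne_mid (h : IsUnitEquilateral u v w) : u ≠ v := by
  rintro rfl
  have := h.inner_left_mid
  rw [real_inner_self_eq_norm_sq, h.norm_left] at this
  norm_num at this

lemma inner_of_mem_of_ne (h : IsUnitEquilateral u v w) (hx : x ∈ ({u, v, w} : Set V))
    (hy : y ∈ ({u, v, w} : Set V)) (hxy : x ≠ y) : ⟪x, y⟫ = -1 / 2 := by
  have huv := h.inner_left_mid
  have hvw := h.rotate.inner_left_mid
  have hwu := h.rotate.rotate.inner_left_mid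
  rcases hx with rfl | rfl | rfl <;> rcases hy with rfl | rfl | rfl <;>
    first | exact absurd rfl hxy | assumption | (rw [real_inner_comm]; assumption)

lemma dist_of_mem_of_ne (h : IsUnitEquilateral u v w) (hx : x ∈ ({u, v, w} : Set V))
    (hy : y ∈ ({u, v, w} : Set V)) (hxy : x ≠ y) : dist x y = √3 := by
  rw [dist_eq_norm, ← sqrt_sq (norm_nonneg _), norm_sub_sq_real, h.norm_of_mem hx,
    h.norm_of_mem hy, h.inner_of_mem_of_ne hx hy hxy]
  norm_num

lemma add_add_eq_zero_of_mem (h : IsUnitEquilateral u v w) (hx : x ∈ ({u, v, w} : Set V))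
    (hy : y ∈ ({u, v, w} : Set V)) (hz : z ∈ ({u, v, w} : Set V)) (hxy : x ≠ y) (hxz : x ≠ z)
    (hyz : y ≠ z) : x + y + z = 0 := by
  rw [← inner_self_eq_zero (𝕜 := ℝ)]
  simp only [inner_add_left, inner_add_right, real_inner_self_eq_norm_sq, h.norm_of_mem hx,
    h.norm_of_mem hy, h.norm_of_mem hz, h.inner_of_mem_of_ne hx hy hxy,
    h.inner_of_mem_of_ne hy hx hxy.symm, h.inner_of_mem_of_ne hx hz hxz,
    h.inner_of_mem_of_ne hz hx hxz.symm, h.inner_of_mem_of_ne hy hz hyz,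
    h.inner_of_mem_of_ne hz hy hyz.symm]
  norm_num

lemma angle_zero_of_mem (h : IsUnitEquilateral u v w) (hx : x ∈ ({u, v, w} : Set V))
    (hy : y ∈ ({u, v, w} : Set V)) (hxy : x ≠ y) : ∠ x 0 y = 2 * π / 3 := by
  refine angle_eq_of_cos_eq (by positivity) (by linarith [pi_pos]) ?_
  rw [vsub_eq_sub, vsub_eq_sub, sub_zero, sub_zero, h.inner_of_mem_of_ne hx hy hxy,
    h.norm_of_mem hx, h.norm_of_mem hy, show 2 * π / 3 = π - π / 3 by ring, cos_pi_sub,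
    cos_pi_div_three]
  norm_num

lemma angle_of_zero_of_mem (h : IsUnitEquilateral u v w) (hx : x ∈ ({u, v, w} : Set V))
    (hy : y ∈ ({u, v, w} : Set V)) (hxy : x ≠ y) : ∠ 0 x y = π / 6 := by
  refine angle_eq_of_cos_eq (by positivity) (by linarith [pi_pos]) ?_
  rw [vsub_eq_sub, vsub_eq_sub, zero_sub, inner_neg_left, inner_sub_right, norm_neg,
    ← dist_eq_norm, h.dist_of_mem_of_ne hy hx hxy.symm, real_inner_self_eq_norm_sq,
    h.norm_of_mem hx, h.inner_of_mem_of_ne hx hy hxy, cos_pi_div_six]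
  have h3 : √3 * √3 = 3 := mul_self_sqrt (by norm_num)
  field_simp
  nlinarith

lemma angle_of_mem (h : IsUnitEquilateral u v w) (hx : x ∈ ({u, v, w} : Set V))
    (hy : y ∈ ({u, v, w} : Set V)) (hz : z ∈ ({u, v, w} : Set V)) (hxy : x ≠ y) (hxz : x ≠ z)
    (hyz : y ≠ z) : ∠ x z y = π / 3 := by
  refine angle_eq_of_cos_eq (by positivity) (by linarith [pi_pos]) ?_
  rw [vsub_eq_sub, vsub_eq_sub, ← dist_eq_norm, ← dist_eq_norm, h.dist_of_mem_of_ne hx hz hxz,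
    h.dist_of_mem_of_ne hy hz hyz, inner_sub_left, inner_sub_right, inner_sub_right,
    real_inner_self_eq_norm_sq, h.norm_of_mem hz, h.inner_of_mem_of_ne hx hy hxy,
    h.inner_of_mem_of_ne hx hz hxz, h.inner_of_mem_of_ne hz hy hyz.symm,
    mul_self_sqrt (by norm_num), cos_pi_div_three]
  norm_num

lemma pi_div_six_le_angle (h : IsUnitEquilateral u v w) {a b c : V}
    (ha : a ∈ insert 0 ({u, v, w} : Set V)) (hb : b ∈ insert 0 ({u, v, w} : Set V))
    (hc : c ∈ insert 0 ({u, v, w} : Set V)) (hab : a ≠ b) (hac : a ≠ c) (hbc : b ≠ c) :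
    π / 6 ≤ ∠ a c b := by
  rcases hc with rfl | hc
  · rw [h.angle_zero_of_mem (ha.resolve_left hac) (hb.resolve_left hbc) hab]
    linarith [pi_pos]
  rcases ha with rfl | ha
  · rw [h.angle_of_zero_of_mem hc (hb.resolve_left hab.symm) hbc.symm]
  rcases hb with rfl | hb
  · rw [angle_comm, h.angle_of_zero_of_mem hc ha hac.symm]
  rw [h.angle_of_mem ha hb hc hab hac hbc]
  linarith [pi_pos]

lemma inner_eq_half_of_dist_eq (h : IsUnitEquilateral u v w) (hx : x ∈ ({u, v, w} : Set V))
    (hxo : dist x o = dist 0 o) : ⟪x, o⟫ = 1 / 2 := by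
  have := congrArg (· ^ 2) hxo
  simp only [dist_eq_norm, zero_sub, norm_neg, norm_sub_sq_real, h.norm_of_mem hx] at this
  linarith

lemma sep_dist_lt_eq_empty (h : IsUnitEquilateral u v w) (hx : x ∈ ({u, v, w} : Set V))
    (hy : y ∈ ({u, v, w} : Set V)) (hxy : x ≠ y) (hxo : dist x o = r) (hyo : dist y o = r)
    (h0o : dist 0 o = r) : {p ∈ insert 0 ({u, v, w} : Set V) | dist p o < r} = ∅ := by
  refine Set.eq_empty_of_forall_notMem fun p ⟨hp, hpo⟩ ↦ ?_
  rcases hp with rfl | hp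
  · exact hpo.ne h0o
  by_cases hpx : p = x
  · exact hpo.ne (hpx ▸ hxo)
  by_cases hpy : p = y
  · exact hpo.ne (hpy ▸ hyo)
  have hp_eq : p = -(x + y) := by
    rw [eq_neg_iff_add_eq_zero, add_comm]
    exact h.add_add_eq_zero_of_mem hx hy hp hxy (Ne.symm hpx) (Ne.symm hpy)
  have hpo' : ⟪p, o⟫ = -1 := by
    rw [hp_eq, inner_neg_left, inner_add_left, h.inner_eq_half_of_dist_eq hx (hxo.trans h0o.symm),
      h.inner_eq_half_of_dist_eq hy (hyo.trans h0o.symm)]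
    norm_num
  have hsq : dist p o ^ 2 = 3 + r ^ 2 := by
    rw [dist_eq_norm, norm_sub_sq_real, h.norm_of_mem hp, hpo', ← h0o, dist_eq_norm, zero_sub,
      norm_neg]
    ring
  nlinarith [dist_nonneg (x := p) (y := o)]

end IsUnitEquilateral

end UnitEquilateral

lemma alphaInf_eq_of_mem_of_forall_le {A : Set (EuclideanSpace ℝ (Fin 2))} {ℓ : ℕ} {θ : ℝ}
    (hθ : θ ∈ angleSet A ℓ) (hle : ∀ t ∈ angleSet A ℓ, θ ≤ t) : alphaInf A ℓ = θ := by
  refine IsLeast.csInf_eq ⟨Set.mem_insert_of_mem _ hθ, Set.forall_mem_insert.2 ⟨?_, hle⟩⟩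
  obtain ⟨a, b, c, -, -, -, -, -, -, -, -, -, -, -, -, -, -, -, rfl⟩ := hθ
  exact angle_le_pi a c b

namespace IsUnitEquilateral

variable {u v w : EuclideanSpace ℝ (Fin 2)} {θ : ℝ} {ℓ : ℕ}

lemma pi_div_six_le_of_mem_angleSet (h : IsUnitEquilateral u v w)
    (hθ : θ ∈ angleSet (insert 0 {u, v, w}) ℓ) : π / 6 ≤ θ := by
  obtain ⟨a, b, c, -, -, ha, hb, hc, hab, hac, hbc, -, -, -, -, -, -, rfl⟩ := hθ
  exact h.pi_div_six_le_angle ha hb hc hab hac hbc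

lemma eq_pi_div_three_of_mem_angleSet_one (h : IsUnitEquilateral u v w)
    (hθ : θ ∈ angleSet (insert 0 {u, v, w}) 1) : θ = π / 3 := by
  obtain ⟨a, b, c, o, r, ha, hb, hc, hab, hac, hbc, -, hao, hbo, hco, -, hcard, rfl⟩ := hθ
  rcases ha with rfl | ha
  · rw [h.sep_dist_lt_eq_empty (hb.resolve_left hab.symm) (hc.resolve_left hac.symm) hbc hbo hco
      hao, Set.ncard_empty] at hcard
    exact absurd hcard zero_ne_one
  rcases hb with rfl | hb
  · rw [h.sep_dist_lt_eq_empty ha (hc.resolve_left hbc.symm) hac hao hco hbo,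
      Set.ncard_empty] at hcard
    exact absurd hcard zero_ne_one
  rcases hc with rfl | hc
  · rw [h.sep_dist_lt_eq_empty ha hb hab hao hbo hco, Set.ncard_empty] at hcard
    exact absurd hcard zero_ne_one
  exact h.angle_of_mem ha hb hc hab hac hbc

lemma pi_div_six_mem_angleSet_zero (h : IsUnitEquilateral u v w) :
    π / 6 ∈ angleSet (insert 0 {u, v, w}) 0 := by
  have hu : u ∈ ({u, v, w} : Set _) := by simp
  have hv : v ∈ ({u, v, w} : Set _) := by simp
  have hangle := h.angle_of_zero_of_mem hu hv h.left_ne_mid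
  have hu0 := h.ne_zero_of_mem hu
  have hv0 := h.ne_zero_of_mem hv
  have hcircle : dist u (u + v) = 1 ∧ dist v (u + v) = 1 ∧ dist 0 (u + v) = 1 := by
    refine ⟨?_, ?_, ?_⟩
    · rw [dist_eq_norm, sub_add_cancel_left, norm_neg, h.norm_mid]
    · rw [dist_eq_norm, sub_add_cancel_right, norm_neg, h.norm_left]
    · rw [dist_zero_left, eq_neg_of_add_eq_zero_left h.add_add, norm_neg, h.norm_right]
  refine ⟨0, v, u, u + v, 1, Set.mem_insert _ _, Set.mem_insert_of_mem _ hv,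
    Set.mem_insert_of_mem _ hu, hv0.symm, hu0.symm, h.left_ne_mid.symm, ?_, hcircle.2.2,
    hcircle.2.1, hcircle.1, Set.toFinite _, ?_, hangle.symm⟩
  · rw [Set.pair_comm]
    exact not_collinear_of_angle_pos_of_lt_pi hu0.symm h.left_ne_mid.symm
      (by rw [hangle]; positivity) (by rw [hangle]; linarith [pi_pos])
  · rw [h.sep_dist_lt_eq_empty hu hv h.left_ne_mid hcircle.1 hcircle.2.1 hcircle.2.2,
      Set.ncard_empty]

lemma pi_div_three_mem_angleSet_one (h : IsUnitEquilateral u v w) :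
    π / 3 ∈ angleSet (insert 0 {u, v, w}) 1 := by
  have hu : u ∈ ({u, v, w} : Set _) := by simp
  have hv : v ∈ ({u, v, w} : Set _) := by simp
  have hw : w ∈ ({u, v, w} : Set _) := by simp
  have huv := h.left_ne_mid
  have hvw := h.rotate.left_ne_mid
  have hwu := h.rotate.rotate.left_ne_mid
  have hangle := h.angle_of_mem hu hv hw huv hwu.symm hvw
  refine ⟨u, v, w, 0, 1, Set.mem_insert_of_mem _ hu, Set.mem_insert_of_mem _ hv,
    Set.mem_insert_of_mem _ hw, huv, hwu.symm, hvw, ?_, ?_, ?_, ?_, Set.toFinite _, ?_,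
    hangle.symm⟩
  · rw [Set.pair_comm]
    exact not_collinear_of_angle_pos_of_lt_pi hwu.symm hvw
      (by rw [hangle]; positivity) (by rw [hangle]; linarith [pi_pos])
  · rw [dist_zero_right, h.norm_left]
  · rw [dist_zero_right, h.norm_mid]
  · rw [dist_zero_right, h.norm_right]
  · rw [h.sep_dist_lt_one_eq_singleton, Set.ncard_singleton]

lemma alphaInf_zero (h : IsUnitEquilateral u v w) :
    alphaInf (insert 0 {u, v, w}) 0 = π / 6 :=
  alphaInf_eq_of_mem_of_forall_le h.pi_div_six_mem_angleSet_zero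
    fun _ ht ↦ h.pi_div_six_le_of_mem_angleSet ht

lemma alphaInf_one (h : IsUnitEquilateral u v w) :
    alphaInf (insert 0 {u, v, w}) 1 = π / 3 :=
  alphaInf_eq_of_mem_of_forall_le h.pi_div_three_mem_angleSet_one
    fun _ ht ↦ (h.eq_pi_div_three_of_mem_angleSet_one ht).ge

end IsUnitEquilateral

lemma exists_isUnitEquilateral : ∃ u v w : EuclideanSpace ℝ (Fin 2), IsUnitEquilateral u v w := by
  have h3 : √3 ^ 2 = 3 := sq_sqrt (by norm_num)
  refine ⟨!₂[1, 0], !₂[-1 / 2, √3 / 2], !₂[-1 / 2, -(√3 / 2)], ⟨?_, ?_, ?_, ?_⟩⟩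
  · simp [EuclideanSpace.norm_eq]
  · rw [EuclideanSpace.norm_eq, sqrt_eq_one]
    simp [Fin.sum_univ_two]
    nlinarith
  · rw [EuclideanSpace.norm_eq, sqrt_eq_one]
    simp [Fin.sum_univ_two]
    nlinarith
  · ext i
    fin_cases i <;> norm_num

/-- There is a finite set `A ⊆ ℝ²` (the vertices of an equilateral triangle together
with its barycenter) with `α₀(A) = π/6 < π/3 = α₁(A)`. -/
theorem exists_finite_alpha_zero_lt_alpha_one :
    ∃ A : Set (EuclideanSpace ℝ (Fin 2)),
      A.Finite ∧
      (∃ a b c : EuclideanSpace ℝ (Fin 2),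
        dist a b = dist b c ∧ dist b c = dist c a ∧ a ≠ b ∧
        A = {a, b, c, (3 : ℝ)⁻¹ • (a + b + c)}) ∧
      alphaInf A 0 = π / 6 ∧ alphaInf A 1 = π / 3 ∧
      alphaInf A 0 < alphaInf A 1 := by
  obtain ⟨u, v, w, h⟩ := exists_isUnitEquilateral
  have hu : u ∈ ({u, v, w} : Set _) := by simp
  have hv : v ∈ ({u, v, w} : Set _) := by simp
  have hw : w ∈ ({u, v, w} : Set _) := by simp
  refine ⟨insert 0 {u, v, w}, Set.toFinite _, ⟨u, v, w, ?_, ?_, h.left_ne_mid, ?_⟩,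
    h.alphaInf_zero, h.alphaInf_one, ?_⟩
  · rw [h.dist_of_mem_of_ne hu hv h.left_ne_mid, h.dist_of_mem_of_ne hv hw h.rotate.left_ne_mid]
  · rw [h.dist_of_mem_of_ne hv hw h.rotate.left_ne_mid,
      h.dist_of_mem_of_ne hw hu h.rotate.rotate.left_ne_mid]
  · rw [h.add_add, smul_zero]
    ext p
    simp only [Set.mem_insert_iff, Set.mem_singleton_iff]
    tauto
  · rw [h.alphaInf_zero, h.alphaInf_one]
    linarith [pi_pos]
end

section
/- For the four-point set consisting of the vertices a, b, c of an equilateral triangle and its barycenter d = (a+b+c)/3, the circumcircle of a, b, c encloses exactly one point of the set (namely d), and each of the three circumcircles through d and two triangle vertices encloses no point of the set. -/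
open Real EuclideanGeometry RealInnerProductSpace

private lemma EB_eq_of_sq (x y : ℝ) (hx : 0 ≤ x) (hy : 0 ≤ y) (h : x ^ 2 = y ^ 2) :
    x = y := by
  have h2 : (x - y) * (x + y) = 0 := by ring_nf; linarith
  rcases mul_eq_zero.mp h2 with h3 | h3
  · linarith
  · linarith

private lemma EB_inner_perp {E : Type*} [NormedAddCommGroup E] [InnerProductSpace ℝ E]
    (p q o o' : E) (h : dist p o = dist q o) (h' : dist p o' = dist q o') :
    ⟪q - p, o - o'⟫ = 0 := by
  have e1 : ‖p - o‖ ^ 2 = ‖q - o‖ ^ 2 := by rw [← dist_eq_norm, ← dist_eq_norm, h]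
  have e2 : ‖p - o'‖ ^ 2 = ‖q - o'‖ ^ 2 := by rw [← dist_eq_norm, ← dist_eq_norm, h']
  rw [norm_sub_sq_real, norm_sub_sq_real] at e1 e2
  simp only [inner_sub_left, inner_sub_right]
  linarith

private lemma EB_center_unique (p q s o o' : EuclideanSpace ℝ (Fin 2))
    (h1 : dist p o = dist q o) (h2 : dist p o = dist s o)
    (h1' : dist p o' = dist q o') (h2' : dist p o' = dist s o')
    (hG : ⟪q - p, s - p⟫ ^ 2 < ⟪q - p, q - p⟫ * ⟪s - p, s - p⟫) :
    o = o' := by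
  set u := q - p with hu
  set v := s - p with hv
  have hw1 : ⟪u, o - o'⟫ = 0 := EB_inner_perp p q o o' h1 h1'
  have hw2 : ⟪v, o - o'⟫ = 0 := EB_inner_perp p s o o' h2 h2'
  have hLI : LinearIndependent ℝ ![u, v] := by
    rw [LinearIndependent.pair_iff]
    intro α β hαβ
    have t1 : ⟪α • u + β • v, u⟫ = 0 := by rw [hαβ]; simp
    have t2 : ⟪α • u + β • v, v⟫ = 0 := by rw [hαβ]; simp
    simp only [inner_add_left, real_inner_smul_left] at t1 t2
    have hc : ⟪v, u⟫ = ⟪u, v⟫ := real_inner_comm u v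
    rw [hc] at t1
    have hD : 0 < ⟪u, u⟫ * ⟪v, v⟫ - ⟪u, v⟫ ^ 2 := by linarith [sq_nonneg (⟪u, v⟫ : ℝ)]
    have eα : α * (⟪u, u⟫ * ⟪v, v⟫ - ⟪u, v⟫ ^ 2) = 0 := by
      linear_combination ⟪v, v⟫ * t1 - ⟪u, v⟫ * t2
    have eβ : β * (⟪u, u⟫ * ⟪v, v⟫ - ⟪u, v⟫ ^ 2) = 0 := by
      linear_combination ⟪u, u⟫ * t2 - ⟪u, v⟫ * t1
    constructor
    · rcases mul_eq_zero.mp eα with h | h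
      · exact h
      · linarith
    · rcases mul_eq_zero.mp eβ with h | h
      · exact h
      · linarith
  have hspan : Submodule.span ℝ {u, v} = ⊤ := by
    have := finrank_span_eq_card hLI
    have hr : Set.range ![u, v] = {u, v} := by
      simp only [Matrix.range_cons, Matrix.range_empty, Set.union_empty,
        Set.union_singleton]
      exact Set.pair_comm v u
    rw [hr] at this
    exact Submodule.eq_top_of_finrank_eq (by rw [this, finrank_euclideanSpace_fin]; simp)
  have hmem : o - o' ∈ Submodule.span ℝ ({u, v} : Set (EuclideanSpace ℝ (Fin 2))) := by
    rw [hspan]; trivial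
  obtain ⟨α, β, hαβ⟩ := Submodule.mem_span_pair.mp hmem
  have hz : ⟪o - o', o - o'⟫ = 0 := by
    rw [← hαβ]; simp only [inner_add_left, real_inner_smul_left]
    rw [hαβ, hw1, hw2]; ring
  have := inner_self_eq_zero.mp hz
  rw [sub_eq_zero] at this
  exact this

/-- Circumcircle of the three vertices: encloses exactly the centroid. -/
private lemma EB_in (a b c : EuclideanSpace ℝ (Fin 2)) (s : ℝ) (hs : 0 < s)
    (hab : dist a b = s) (hbc : dist b c = s) (hca : dist c a = s)
    (A : Set (EuclideanSpace ℝ (Fin 2)))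
    (hA : ∀ p, p ∈ A ↔ p = a ∨ p = b ∨ p = c ∨ p = (3 : ℝ)⁻¹ • (a + b + c))
    (o : EuclideanSpace ℝ (Fin 2)) (r : ℝ)
    (h1 : dist a o = r) (h2 : dist b o = r) (h3 : dist c o = r) :
    {p ∈ A | dist p o < r} = {(3 : ℝ)⁻¹ • (a + b + c)} := by
  obtain ⟨u, rfl⟩ : ∃ u, b = a + u := ⟨b - a, by abel⟩
  obtain ⟨v, rfl⟩ : ∃ v, c = a + v := ⟨c - a, by abel⟩
  obtain ⟨w, rfl⟩ : ∃ w, o = a + w := ⟨o - a, by abel⟩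
  have hctr : (3 : ℝ)⁻¹ • (a + (a + u) + (a + v)) = a + (3 : ℝ)⁻¹ • (u + v) := by module
  rw [hctr] at hA ⊢
  set m : EuclideanSpace ℝ (Fin 2) := (3 : ℝ)⁻¹ • (u + v) with hm
  -- basic inner product facts
  have hnu : ‖u‖ = s := by rwa [dist_self_add_right] at hab
  have hnv : ‖v‖ = s := by rwa [dist_self_add_left] at hca
  have hnuv : ‖u - v‖ = s := by rwa [dist_add_left, dist_eq_norm] at hbc
  have huu : ⟪u, u⟫ = s ^ 2 := by rw [real_inner_self_eq_norm_sq, hnu]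
  have hvv : ⟪v, v⟫ = s ^ 2 := by rw [real_inner_self_eq_norm_sq, hnv]
  have huv : ⟪u, v⟫ = s ^ 2 / 2 := by
    have e : ‖u - v‖ ^ 2 = s ^ 2 := by rw [hnuv]
    rw [norm_sub_sq_real, hnu, hnv] at e; linarith
  have hvu : ⟪v, u⟫ = s ^ 2 / 2 := by rw [real_inner_comm]; exact huv
  have hds : ∀ x y : EuclideanSpace ℝ (Fin 2),
      dist (a + x) (a + y) ^ 2 = ⟪x - y, x - y⟫ := by
    intro x y; rw [dist_add_left, dist_eq_norm, ← real_inner_self_eq_norm_sq]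
  have hds0 : ∀ x : EuclideanSpace ℝ (Fin 2), dist a (a + x) ^ 2 = ⟪x, x⟫ := by
    intro x; rw [dist_self_add_right, ← real_inner_self_eq_norm_sq]
  -- squared distances to the centroid
  have A1 : ⟪m, m⟫ = s ^ 2 / 3 := by
    rw [hm]
    simp only [inner_sub_left, inner_sub_right, inner_add_left, inner_add_right,
      real_inner_smul_left, real_inner_smul_right]
    rw [huu, hvv, huv, hvu]; ring
  have A2 : ⟪u - m, u - m⟫ = s ^ 2 / 3 := by
    rw [hm]
    simp only [inner_sub_left, inner_sub_right, inner_add_left, inner_add_right,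
      real_inner_smul_left, real_inner_smul_right]
    rw [huu, hvv, huv, hvu]; ring
  have A3 : ⟪v - m, v - m⟫ = s ^ 2 / 3 := by
    rw [hm]
    simp only [inner_sub_left, inner_sub_right, inner_add_left, inner_add_right,
      real_inner_smul_left, real_inner_smul_right]
    rw [huu, hvv, huv, hvu]; ring
  have h1' : dist a (a + m) = dist (a + u) (a + m) :=
    EB_eq_of_sq _ _ dist_nonneg dist_nonneg (by rw [hds0, hds, A1, A2])
  have h2' : dist a (a + m) = dist (a + v) (a + m) :=
    EB_eq_of_sq _ _ dist_nonneg dist_nonneg (by rw [hds0, hds, A1, A3])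
  have hG : ⟪(a + u) - a, (a + v) - a⟫ ^ 2 <
      ⟪(a + u) - a, (a + u) - a⟫ * ⟪(a + v) - a, (a + v) - a⟫ := by
    have e1 : (a + u) - a = u := by abel
    have e2 : (a + v) - a = v := by abel
    rw [e1, e2, huu, hvv, huv]
    nlinarith [pow_pos hs 2]
  have ho : a + w = a + m :=
    EB_center_unique a (a + u) (a + v) (a + w) (a + m)
      (h1.trans h2.symm) (h1.trans h3.symm) h1' h2' hG
  have hw : w = m := add_left_cancel ho
  have hr2 : r ^ 2 = s ^ 2 / 3 := by rw [← h1, hw, hds0, A1]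
  have h0r : 0 ≤ r := h1 ▸ dist_nonneg
  have hrpos : 0 < r := by nlinarith [mul_pos hs hs]
  ext p
  simp only [Set.mem_sep_iff, Set.mem_singleton_iff]
  constructor
  · rintro ⟨hp, hlt⟩
    rcases (hA p).mp hp with rfl | rfl | rfl | rfl
    · rw [h1] at hlt; linarith
    · rw [h2] at hlt; linarith
    · rw [h3] at hlt; linarith
    · rfl
  · rintro rfl
    refine ⟨(hA _).mpr (Or.inr (Or.inr (Or.inr rfl))), ?_⟩
    rw [hw, dist_self]
    exact hrpos

/-- Circle through two vertices and the centroid: encloses none of the points. -/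
private lemma EB_out (a b c : EuclideanSpace ℝ (Fin 2)) (s : ℝ) (hs : 0 < s)
    (hab : dist a b = s) (hbc : dist b c = s) (hca : dist c a = s)
    (A : Set (EuclideanSpace ℝ (Fin 2)))
    (hA : ∀ p, p ∈ A ↔ p = a ∨ p = b ∨ p = c ∨ p = (3 : ℝ)⁻¹ • (a + b + c))
    (o : EuclideanSpace ℝ (Fin 2)) (r : ℝ)
    (h1 : dist a o = r) (h2 : dist b o = r)
    (h3 : dist ((3 : ℝ)⁻¹ • (a + b + c)) o = r) :
    {p ∈ A | dist p o < r} = ∅ := by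
  obtain ⟨u, rfl⟩ : ∃ u, b = a + u := ⟨b - a, by abel⟩
  obtain ⟨v, rfl⟩ : ∃ v, c = a + v := ⟨c - a, by abel⟩
  obtain ⟨w, rfl⟩ : ∃ w, o = a + w := ⟨o - a, by abel⟩
  have hctr : (3 : ℝ)⁻¹ • (a + (a + u) + (a + v)) = a + (3 : ℝ)⁻¹ • (u + v) := by module
  rw [hctr] at hA h3
  set m : EuclideanSpace ℝ (Fin 2) := (3 : ℝ)⁻¹ • (u + v) with hm
  have hnu : ‖u‖ = s := by rwa [dist_self_add_right] at hab
  have hnv : ‖v‖ = s := by rwa [dist_self_add_left] at hca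
  have hnuv : ‖u - v‖ = s := by rwa [dist_add_left, dist_eq_norm] at hbc
  have huu : ⟪u, u⟫ = s ^ 2 := by rw [real_inner_self_eq_norm_sq, hnu]
  have hvv : ⟪v, v⟫ = s ^ 2 := by rw [real_inner_self_eq_norm_sq, hnv]
  have huv : ⟪u, v⟫ = s ^ 2 / 2 := by
    have e : ‖u - v‖ ^ 2 = s ^ 2 := by rw [hnuv]
    rw [norm_sub_sq_real, hnu, hnv] at e; linarith
  have hvu : ⟪v, u⟫ = s ^ 2 / 2 := by rw [real_inner_comm]; exact huv
  have hds : ∀ x y : EuclideanSpace ℝ (Fin 2),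
      dist (a + x) (a + y) ^ 2 = ⟪x - y, x - y⟫ := by
    intro x y; rw [dist_add_left, dist_eq_norm, ← real_inner_self_eq_norm_sq]
  have hds0 : ∀ x : EuclideanSpace ℝ (Fin 2), dist a (a + x) ^ 2 = ⟪x, x⟫ := by
    intro x; rw [dist_self_add_right, ← real_inner_self_eq_norm_sq]
  -- squared distances to the candidate center `a + (u - m)`
  have A1 : ⟪u - m, u - m⟫ = s ^ 2 / 3 := by
    rw [hm]
    simp only [inner_sub_left, inner_sub_right, inner_add_left, inner_add_right,
      real_inner_smul_left, real_inner_smul_right]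
    rw [huu, hvv, huv, hvu]; ring
  have A2 : ⟪u - (u - m), u - (u - m)⟫ = s ^ 2 / 3 := by
    rw [hm]
    simp only [inner_sub_left, inner_sub_right, inner_add_left, inner_add_right,
      real_inner_smul_left, real_inner_smul_right]
    rw [huu, hvv, huv, hvu]; ring
  have A3 : ⟪m - (u - m), m - (u - m)⟫ = s ^ 2 / 3 := by
    rw [hm]
    simp only [inner_sub_left, inner_sub_right, inner_add_left, inner_add_right,
      real_inner_smul_left, real_inner_smul_right]
    rw [huu, hvv, huv, hvu]; ring
  have A4 : ⟪v - (u - m), v - (u - m)⟫ = s ^ 2 * (4 / 3) := by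
    rw [hm]
    simp only [inner_sub_left, inner_sub_right, inner_add_left, inner_add_right,
      real_inner_smul_left, real_inner_smul_right]
    rw [huu, hvv, huv, hvu]; ring
  have h1' : dist a (a + (u - m)) = dist (a + u) (a + (u - m)) :=
    EB_eq_of_sq _ _ dist_nonneg dist_nonneg (by rw [hds0, hds, A1, A2])
  have h2' : dist a (a + (u - m)) = dist (a + m) (a + (u - m)) :=
    EB_eq_of_sq _ _ dist_nonneg dist_nonneg (by rw [hds0, hds, A1, A3])
  have hG : ⟪(a + u) - a, (a + m) - a⟫ ^ 2 <
      ⟪(a + u) - a, (a + u) - a⟫ * ⟪(a + m) - a, (a + m) - a⟫ := by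
    have e1 : (a + u) - a = u := by abel
    have e2 : (a + m) - a = m := by abel
    rw [e1, e2, hm]
    simp only [inner_add_left, inner_add_right, real_inner_smul_left,
      real_inner_smul_right]
    rw [huu, hvv, huv, hvu]
    nlinarith [pow_pos hs 2]
  have ho : a + w = a + (u - m) :=
    EB_center_unique a (a + u) (a + m) (a + w) (a + (u - m))
      (h1.trans h2.symm) (h1.trans h3.symm) h1' h2' hG
  have hw : w = u - m := add_left_cancel ho
  have hr2 : r ^ 2 = s ^ 2 / 3 := by rw [← h1, hw, hds0, A1]
  have h0r : 0 ≤ r := h1 ▸ dist_nonneg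
  ext p
  simp only [Set.mem_sep_iff, Set.mem_empty_iff_false, iff_false, not_and]
  intro hp hlt
  rcases (hA p).mp hp with rfl | rfl | rfl | rfl
  · rw [h1] at hlt; exact absurd hlt (lt_irrefl r)
  · rw [h2] at hlt; exact absurd hlt (lt_irrefl r)
  · -- the third vertex is strictly outside
    have hq : dist (a + v) (a + w) ^ 2 = s ^ 2 * (4 / 3) := by rw [hds, hw, A4]
    have hd0 : (0 : ℝ) ≤ dist (a + v) (a + w) := dist_nonneg
    have hsq : dist (a + v) (a + w) ^ 2 < r ^ 2 :=
      pow_lt_pow_left₀ hlt hd0 (by norm_num)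
    have hs2 : 0 < s ^ 2 := pow_pos hs 2
    linarith
  · rw [h3] at hlt; exact absurd hlt (lt_irrefl r)

/-- For the vertices `a, b, c` of an equilateral triangle and its barycenter
`d = (a+b+c)/3`: the circumcircle of `a, b, c` encloses exactly `d` among the four
points, and each circumcircle through `d` and two of the vertices encloses none of
the four points. -/
theorem equilateral_barycenter_enclosed_points
    (a b c : EuclideanSpace ℝ (Fin 2))
    (hne : a ≠ b)
    (heq₁ : dist a b = dist b c) (heq₂ : dist b c = dist c a) :
    let d := (3 : ℝ)⁻¹ • (a + b + c)
    let A : Set (EuclideanSpace ℝ (Fin 2)) := {a, b, c, d}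
    (∀ (o : EuclideanSpace ℝ (Fin 2)) (r : ℝ),
      dist a o = r → dist b o = r → dist c o = r →
      {p ∈ A | dist p o < r} = {d}) ∧
    (∀ (o : EuclideanSpace ℝ (Fin 2)) (r : ℝ),
      dist a o = r → dist b o = r → dist d o = r →
      {p ∈ A | dist p o < r} = ∅) ∧
    (∀ (o : EuclideanSpace ℝ (Fin 2)) (r : ℝ),
      dist b o = r → dist c o = r → dist d o = r →
      {p ∈ A | dist p o < r} = ∅) ∧
    (∀ (o : EuclideanSpace ℝ (Fin 2)) (r : ℝ),
      dist a o = r → dist c o = r → dist d o = r →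
      {p ∈ A | dist p o < r} = ∅) := by
  intro d A
  have hs : 0 < dist a b := dist_pos.mpr hne
  have hab : dist a b = dist a b := rfl
  have hbc : dist b c = dist a b := heq₁.symm
  have hca : dist c a = dist a b := (heq₁.trans heq₂).symm
  have hA : ∀ p, p ∈ A ↔ p = a ∨ p = b ∨ p = c ∨ p = (3 : ℝ)⁻¹ • (a + b + c) := by
    intro p
    simp only [A, Set.mem_insert_iff, Set.mem_singleton_iff, d]
  have hA₃ : ∀ p, p ∈ A ↔ p = b ∨ p = c ∨ p = a ∨ p = (3 : ℝ)⁻¹ • (b + c + a) := by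
    intro p
    have hsum : (3 : ℝ)⁻¹ • (b + c + a) = (3 : ℝ)⁻¹ • (a + b + c) := by module
    rw [hA p, hsum]
    tauto
  have hA₄ : ∀ p, p ∈ A ↔ p = a ∨ p = c ∨ p = b ∨ p = (3 : ℝ)⁻¹ • (a + c + b) := by
    intro p
    have hsum : (3 : ℝ)⁻¹ • (a + c + b) = (3 : ℝ)⁻¹ • (a + b + c) := by module
    rw [hA p, hsum]
    tauto
  refine ⟨?_, ?_, ?_, ?_⟩
  · intro o r h1 h2 h3
    exact EB_in a b c (dist a b) hs hab hbc hca A hA o r h1 h2 h3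
  · intro o r h1 h2 h3
    exact EB_out a b c (dist a b) hs hab hbc hca A hA o r h1 h2 h3
  · intro o r h1 h2 h3
    have hsum : (3 : ℝ)⁻¹ • (b + c + a) = (3 : ℝ)⁻¹ • (a + b + c) := by module
    have h3' : dist ((3 : ℝ)⁻¹ • (b + c + a)) o = r := by rw [hsum]; exact h3
    exact EB_out b c a (dist a b) hs hbc hca hab A hA₃ o r h1 h2 h3'
  · intro o r h1 h2 h3
    have hsum : (3 : ℝ)⁻¹ • (a + c + b) = (3 : ℝ)⁻¹ • (a + b + c) := by module
    have h3' : dist ((3 : ℝ)⁻¹ • (a + c + b)) o = r := by rw [hsum]; exact h3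
    have hac : dist a c = dist a b := by rw [dist_comm]; exact hca
    have hcb : dist c b = dist a b := by rw [dist_comm]; exact hbc
    have hba : dist b a = dist a b := dist_comm b a
    exact EB_out a c b (dist a b) hs hac hcb hba A hA₄ o r h1 h2 h3'
end

section
/- The function h(t) = (2/3)·[(π − 2t)·cos t + 2·sin t]·sin t satisfies h''(t) = −(8/3)·(π − 2t)·sin t·cos t, and h is concave on the interval [0, π]. -/
/-!
Differentiating twice, the terms `± (4/3)(cos² t − sin² t)` cancel and
`h''(t) = −(8/3) (π − 2t) sin t cos t`. On `[0, π]` we have `sin t ≥ 0`, and `π − 2t` and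
`cos t` change sign together at `π/2`, so `h'' ≤ 0` there and `h` is concave.
-/

open Real Set

noncomputable def angleDensity (t : ℝ) : ℝ :=
  (2/3) * ((π - 2*t) * cos t + 2 * sin t) * sin t

noncomputable def angleDensityDeriv (t : ℝ) : ℝ :=
  (2/3) * ((π - 2*t) * (cos t ^ 2 - sin t ^ 2) + 2 * sin t * cos t)

lemma hasDerivAt_pi_sub_two_mul (t : ℝ) : HasDerivAt (fun t : ℝ => π - 2*t) (-2) t := by
  simpa using ((hasDerivAt_id t).const_mul 2).const_sub π

lemma hasDerivAt_angleDensity (t : ℝ) : HasDerivAt angleDensity (angleDensityDeriv t) t := by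
  have := (((hasDerivAt_pi_sub_two_mul t).mul (hasDerivAt_cos t)
    |>.add ((hasDerivAt_sin t).const_mul 2)).const_mul (2/3 : ℝ)).mul (hasDerivAt_sin t)
  exact this.congr_deriv (by simp only [angleDensityDeriv, Pi.add_apply, Pi.mul_apply]; ring)

lemma hasDerivAt_angleDensityDeriv (t : ℝ) :
    HasDerivAt angleDensityDeriv (-(8/3) * (π - 2*t) * sin t * cos t) t := by
  have := (((hasDerivAt_pi_sub_two_mul t).mul
    (((hasDerivAt_cos t).pow 2).sub ((hasDerivAt_sin t).pow 2))).add
    (((hasDerivAt_sin t).const_mul 2).mul (hasDerivAt_cos t))).const_mul (2/3 : ℝ)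
  exact this.congr_deriv (by simp only [Pi.sub_apply, Pi.pow_apply]; ring)

lemma deriv_angleDensity : deriv angleDensity = angleDensityDeriv :=
  funext fun t => (hasDerivAt_angleDensity t).deriv

lemma pi_sub_two_mul_mul_cos_nonneg {t : ℝ} (ht : t ∈ Icc (-(π / 2)) (π + π / 2)) :
    0 ≤ (π - 2*t) * cos t := by
  rcases le_total t (π / 2) with h | h
  · exact mul_nonneg (by linarith) (cos_nonneg_of_mem_Icc ⟨ht.1, h⟩)
  · exact mul_nonneg_of_nonpos_of_nonpos (by linarith) (cos_nonpos_of_pi_div_two_le_of_le h ht.2)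

lemma deriv_deriv_angleDensity (t : ℝ) :
    deriv (deriv angleDensity) t = -(8/3) * (π - 2*t) * sin t * cos t := by
  rw [deriv_angleDensity]
  exact (hasDerivAt_angleDensityDeriv t).deriv

lemma deriv_deriv_angleDensity_nonpos {t : ℝ} (ht : t ∈ Icc 0 π) :
    deriv (deriv angleDensity) t ≤ 0 := by
  have hsin := sin_nonneg_of_nonneg_of_le_pi ht.1 ht.2
  have hfactor := pi_sub_two_mul_mul_cos_nonneg
    (t := t) ⟨by linarith [pi_pos, ht.1], by linarith [pi_pos, ht.2]⟩
  rw [deriv_deriv_angleDensity]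
  nlinarith [mul_nonneg hsin hfactor]

/-- The density `h(t) = (2/3)[(π − 2t) cos t + 2 sin t] sin t` satisfies
`h''(t) = −(8/3)(π − 2t) sin t cos t`, and `h` is concave on `[0, π]`. -/
theorem h_second_deriv_and_concave :
    let h : ℝ → ℝ := fun t => (2/3) * ((π - 2*t) * Real.cos t + 2 * Real.sin t) * Real.sin t
    (∀ t : ℝ, deriv (deriv h) t = -(8/3) * (π - 2*t) * Real.sin t * Real.cos t) ∧
    ConcaveOn ℝ (Set.Icc 0 π) h := by
  intro h
  change (∀ t, deriv (deriv angleDensity) t = _) ∧ ConcaveOn ℝ _ angleDensity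
  refine ⟨deriv_deriv_angleDensity, concaveOn_of_deriv2_nonpos' (convex_Icc 0 π)
    (fun t _ => (hasDerivAt_angleDensity t).differentiableAt.differentiableWithinAt)
    (fun t _ => ?_) fun t ht => deriv_deriv_angleDensity_nonpos ht⟩
  rw [deriv_angleDensity]
  exact (hasDerivAt_angleDensityDeriv t).differentiableAt.differentiableWithinAt
end

section
/- Let a, b, c be three points on a circle of radius R in ℝ² such that the two arcs from a to c and from c to b each have length greater than d > 0. Then the inscribed angle satisfies ∠acb < π − d/R. -/
/-!
Splitting the angle at `c` along the radius `c o` gives `∠ a c b ≤ ∠ a c o + ∠ o c b`. The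
triangles `a o c` and `c o b` are isosceles with apex `o`, so their base angles at `c` are
`(π - ∠ a o c) / 2` and `(π - ∠ c o b) / 2`, and each central angle exceeds `d / R`.
-/

open Real EuclideanGeometry

namespace EuclideanGeometry

variable {V P : Type*} [NormedAddCommGroup V] [InnerProductSpace ℝ V] [MetricSpace P]
  [NormedAddTorsor V P]

theorem two_mul_angle_add_angle_eq_pi_of_dist_eq {o p q : P} (h : dist o p = dist o q)
    (hp : p ≠ o) : 2 * ∠ o p q + ∠ p o q = π := by
  have hbase : ∠ o p q = ∠ o q p := angle_eq_angle_of_dist_eq h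
  have hsum : ∠ o p q + ∠ p q o + ∠ q o p = π := angle_add_angle_add_angle_eq_pi q hp
  rw [angle_comm p q o, angle_comm q o p] at hsum
  linarith

theorem angle_le_pi_sub_half_add_central_angles {a b c o : P} (ha : dist a o = dist c o)
    (hb : dist b o = dist c o) (hc : c ≠ o) :
    ∠ a c b ≤ π - (∠ a o c + ∠ c o b) / 2 := by
  have hsplit : ∠ a c b ≤ ∠ a c o + ∠ o c b := angle_le_angle_add_angle c a o b
  have hac : 2 * ∠ o c a + ∠ c o a = π :=
    two_mul_angle_add_angle_eq_pi_of_dist_eq (by rw [dist_comm o, dist_comm o, ha]) hc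
  have hcb : 2 * ∠ o c b + ∠ c o b = π :=
    two_mul_angle_add_angle_eq_pi_of_dist_eq (by rw [dist_comm o, dist_comm o, hb]) hc
  rw [angle_comm a c o] at hsplit
  rw [angle_comm c o a] at hac
  linarith

end EuclideanGeometry

/-- If `a, b, c` lie on a circle of radius `R` centered at `o` and the arcs from
`a` to `c` and from `c` to `b` each have length greater than `d > 0` (the arc from
`x` to `y` having length `R · ∠ x o y`), then the inscribed angle satisfies
`∠ a c b < π − d / R`. -/
theorem inscribed_angle_lt_of_long_arcs
    (a b c o : EuclideanSpace ℝ (Fin 2)) (R d : ℝ) (hd : 0 < d)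
    (ha : dist a o = R) (hb : dist b o = R) (hc : dist c o = R)
    (harc₁ : d < R * EuclideanGeometry.angle a o c)
    (harc₂ : d < R * EuclideanGeometry.angle c o b) :
    EuclideanGeometry.angle a c b < π - d / R := by
  have hR : 0 < R := pos_of_mul_pos_left (hd.trans harc₁) (angle_nonneg a o c)
  have hco : c ≠ o := dist_pos.mp (hc ▸ hR)
  have hbound := angle_le_pi_sub_half_add_central_angles (ha.trans hc.symm) (hb.trans hc.symm) hco
  have h₁ : d / R < ∠ a o c := (div_lt_iff₀' hR).mpr harc₁
  have h₂ : d / R < ∠ c o b := (div_lt_iff₀' hR).mpr harc₂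
  linarith
end
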